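/- arXiv:1311.5392 — 7 statements merged into one kernel-verified Lean document; each statement's English description precedes it below -/
import Mathlib

section
/- Let s > 0 and let N ≥ 0 be an integer. Let (A_k, B_k) be a sequence with B_k ≥ 0, R_k = √(A_k² + B_k²) → ∞, and (A_k/R_k, B_k/R_k) → (cos ψ, sin ψ) for some ψ ∈ [0, 3π/4) such that 𝓕_N^s(ψ) ≠ 0. Then 𝓘_N^s(A_k,B_k) / D_k → 1, where D_k = (1/(πΓ(s+1))) ∫₀^{C(A_k,B_k)} cos(Nθ) (A_k + B_k cos θ)^s dθ and C(A,B) = arccos(−A/B) if −B < A < B and C(A,B) = π if A ≥ B. -/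
open MeasureTheory Set Filter

/-- The Fermi integral of order `s`: `φ_s(x) = (1/Γ(s)) ∫₀^∞ t^{s-1}/(e^{t-x}+1) dt`. -/
noncomputable def fermi (s x : ℝ) : ℝ :=
  (1 / Real.Gamma s) * ∫ t in Set.Ioi (0 : ℝ), t ^ (s - 1) / (Real.exp (t - x) + 1)

/-- `𝓘_N^s(A,B) = (1/π) ∫₀^π cos(Nθ) φ_s(A + B cos θ) dθ`. -/
noncomputable def calI (N : ℕ) (s A B : ℝ) : ℝ :=
  (1 / Real.pi) * ∫ θ in (0 : ℝ)..Real.pi, Real.cos (N * θ) * fermi s (A + B * Real.cos θ)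

/-- `C(A,B) = arccos(-A/B)` if `-B < A < B`, and `C(A,B) = π` if `A ≥ B`. -/
noncomputable def Cab (A B : ℝ) : ℝ :=
  if B ≤ A then Real.pi else Real.arccos (-(A / B))

/-- `C(ψ) = π` for `0 ≤ ψ ≤ π/4`, `C(ψ) = arccos(-cot ψ)` for `π/4 < ψ < 3π/4`. -/
noncomputable def Cpsi (ψ : ℝ) : ℝ :=
  if ψ ≤ Real.pi / 4 then Real.pi else Real.arccos (-(Real.cos ψ / Real.sin ψ))

/-- `𝓕_N^s(ψ) = (1/(πΓ(s+1))) ∫₀^{C(ψ)} cos(Nθ)(cos ψ + sin ψ cos θ)^s dθ`. -/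
noncomputable def calF (N : ℕ) (s ψ : ℝ) : ℝ :=
  (1 / (Real.pi * Real.Gamma (s + 1))) *
    ∫ θ in (0 : ℝ)..Cpsi ψ, Real.cos (N * θ) * (Real.cos ψ + Real.sin ψ * Real.cos θ) ^ s

/-!
Substituting `t = R u` gives `φ_s(R v) / R^s = Γ(s)⁻¹ ∫₀^∞ u^{s-1} (e^{R(u-v)} + 1)⁻¹ du`. As
`R → ∞` and `v → L` the integrand tends to `u^{s-1} 1_{u < L}` for `u ≠ L`, and it is dominated
by `e^{M-u} u^{s-1}` once `v ≤ M`, so `φ_s(R v) / R^s → (L₊)^s / Γ(s+1)` for every `L`.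
Writing `A_k + B_k cos θ = R_k (a_k + b_k cos θ)` with `(a_k, b_k) → (cos ψ, sin ψ)`, dominated
convergence in `θ` gives `𝓘_N^s(A_k, B_k) / R_k^s → 𝓕_N^s(ψ)`. On the other side, `C(A, B)` is
exactly where `A + B cos θ` changes sign on `[0, π]`, so `D_k / R_k^s` is the value at
`(a_k, b_k)` of the continuous function `(a, b) ↦ (πΓ(s+1))⁻¹ ∫₀^π cos(Nθ) (a + b cos θ)₊^s dθ`,
which also tends to `𝓕_N^s(ψ)`. As `𝓕_N^s(ψ) ≠ 0`, the ratio tends to `1`.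
-/

open Real Topology

section Fermi

variable {s : ℝ}

lemma fermi_nonneg (hs : 0 < s) (x : ℝ) : 0 ≤ fermi s x := by
  have := Gamma_pos_of_pos hs
  refine mul_nonneg (by positivity) (setIntegral_nonneg measurableSet_Ioi fun t ht => ?_)
  have := rpow_nonneg (le_of_lt ht) (s - 1)
  positivity

lemma fermi_mul_eq {R : ℝ} (hR : 0 < R) (v : ℝ) :
    fermi s (R * v) =
      R ^ s / Gamma s * ∫ u in Ioi 0, u ^ (s - 1) * (exp (R * (u - v)) + 1)⁻¹ := by
  have hsub := integral_comp_mul_left_Ioi (fun t => t ^ (s - 1) / (exp (t - R * v) + 1)) 0 hR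
  rw [mul_zero, smul_eq_mul] at hsub
  have hcongr : ∫ u in Ioi (0 : ℝ), (R * u) ^ (s - 1) / (exp (R * u - R * v) + 1) =
      R ^ (s - 1) * ∫ u in Ioi 0, u ^ (s - 1) * (exp (R * (u - v)) + 1)⁻¹ := by
    rw [← integral_const_mul]
    refine setIntegral_congr_fun measurableSet_Ioi fun u hu => ?_
    rw [mul_rpow hR.le (le_of_lt hu), mul_sub]
    ring
  rw [fermi, ← mul_inv_cancel_left₀ hR.ne' (∫ t in Ioi 0, _), ← hsub, hcongr,
    rpow_sub hR, rpow_one]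
  field_simp

lemma inv_exp_mul_sub_add_one_le {R u v M : ℝ} (hR : 1 ≤ R) (hv : v ≤ M) :
    (exp (R * (u - v)) + 1)⁻¹ ≤ exp (M - u) := by
  rcases le_or_gt u v with huv | hvu
  · calc (exp (R * (u - v)) + 1)⁻¹ ≤ 1 :=
          inv_le_one_of_one_le₀ (by linarith [exp_pos (R * (u - v))])
      _ ≤ exp (M - u) := one_le_exp (by linarith)
  · calc (exp (R * (u - v)) + 1)⁻¹ ≤ (exp (R * (u - v)))⁻¹ :=
          inv_anti₀ (exp_pos _) (by linarith)
      _ ≤ exp (M - u) := by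
          rw [← exp_neg, exp_le_exp]
          nlinarith

lemma integrableOn_fermi_integrand (hs : 0 < s) (x : ℝ) :
    IntegrableOn (fun t : ℝ => t ^ (s - 1) / (exp (t - x) + 1)) (Ioi 0) := by
  refine ((GammaIntegral_convergent hs).const_mul (exp x)).mono'
    (by fun_prop : Measurable fun t : ℝ => t ^ (s - 1) / (exp (t - x) + 1)).aestronglyMeasurable ?_
  refine (ae_restrict_iff' measurableSet_Ioi).2 (ae_of_all _ fun t ht => ?_)
  have := rpow_nonneg (le_of_lt ht) (s - 1)
  have hexp := inv_exp_mul_sub_add_one_le (u := t) (le_refl 1) (le_refl x)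
  rw [one_mul] at hexp
  rw [norm_of_nonneg (by positivity), div_eq_mul_inv]
  calc t ^ (s - 1) * (exp (t - x) + 1)⁻¹ ≤ t ^ (s - 1) * exp (x - t) := by gcongr
    _ = exp x * (exp (-t) * t ^ (s - 1)) := by rw [sub_eq_add_neg x, exp_add]; ring

lemma fermi_mono (hs : 0 < s) : Monotone (fermi s) := by
  intro x y hxy
  have := Gamma_pos_of_pos hs
  refine mul_le_mul_of_nonneg_left (setIntegral_mono_on (integrableOn_fermi_integrand hs x)
    (integrableOn_fermi_integrand hs y) measurableSet_Ioi fun t ht => ?_) (by positivity)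
  have := rpow_nonneg (le_of_lt ht) (s - 1)
  gcongr

lemma fermi_mul_le (hs : 0 < s) {R v M : ℝ} (hR : 1 ≤ R) (hv : v ≤ M) :
    fermi s (R * v) ≤ exp M * R ^ s := by
  have hΓ := Gamma_pos_of_pos hs
  have hbound : ∫ u in Ioi 0, u ^ (s - 1) * (exp (R * (u - v)) + 1)⁻¹ ≤ exp M * Gamma s := by
    rw [Gamma_eq_integral hs, ← integral_const_mul]
    refine integral_mono_of_nonneg ?_ ((GammaIntegral_convergent hs).const_mul _) ?_
    all_goals refine (ae_restrict_iff' measurableSet_Ioi).2 (ae_of_all _ fun u hu => ?_)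
    · have := rpow_nonneg (le_of_lt hu) (s - 1)
      positivity
    · calc u ^ (s - 1) * (exp (R * (u - v)) + 1)⁻¹ ≤ u ^ (s - 1) * exp (M - u) :=
            mul_le_mul_of_nonneg_left (inv_exp_mul_sub_add_one_le hR hv) (rpow_nonneg hu.le _)
        _ = exp M * (exp (-u) * u ^ (s - 1)) := by rw [sub_eq_add_neg M, exp_add]; ring
  rw [fermi_mul_eq (by linarith) v]
  calc R ^ s / Gamma s * _ ≤ R ^ s / Gamma s * (exp M * Gamma s) := by gcongr
    _ = exp M * R ^ s := by field_simp

lemma tendsto_inv_exp_mul_add_one {ι : Type*} {l : Filter ι} {R w : ι → ℝ} {W : ℝ}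
    (hR : Tendsto R l atTop) (hw : Tendsto w l (𝓝 W)) (hW : W ≠ 0) :
    Tendsto (fun k => (exp (R k * w k) + 1)⁻¹) l (𝓝 (if W < 0 then 1 else 0)) := by
  rcases hW.lt_or_gt with hneg | hpos
  · rw [if_pos hneg]
    simpa using ((tendsto_exp_atBot.comp (hR.atTop_mul_neg hneg hw)).add_const 1).inv₀
      (by norm_num)
  · rw [if_neg hpos.not_gt]
    exact tendsto_inv_atTop_zero.comp
      (tendsto_atTop_add_const_right _ 1 (tendsto_exp_atTop.comp (hR.atTop_mul_pos hpos hw)))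

lemma integral_indicator_Iio_rpow (hs : 0 < s) {ℓ : ℝ} (hℓ : 0 ≤ ℓ) :
    ∫ u in Ioi 0, (Iio ℓ).indicator (fun u => u ^ (s - 1)) u = ℓ ^ s / s := by
  rw [integral_indicator measurableSet_Iio, Measure.restrict_restrict measurableSet_Iio,
    Iio_inter_Ioi, ← integral_Ioc_eq_integral_Ioo, ← intervalIntegral.integral_of_le hℓ,
    integral_rpow (Or.inl (by linarith)), sub_add_cancel, zero_rpow hs.ne', sub_zero]

lemma tendsto_fermi_mul_div_rpow (hs : 0 < s) {ι : Type*} {l : Filter ι}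
    [l.IsCountablyGenerated] {R v : ι → ℝ} {L : ℝ} (hR : Tendsto R l atTop)
    (hv : Tendsto v l (𝓝 L)) :
    Tendsto (fun k => fermi s (R k * v k) / R k ^ s) l (𝓝 (max L 0 ^ s / Gamma (s + 1))) := by
  have hlim : Tendsto (fun k => ∫ u in Ioi 0, u ^ (s - 1) * (exp (R k * (u - v k)) + 1)⁻¹) l
      (𝓝 (∫ u in Ioi 0, (Iio (max L 0)).indicator (fun u => u ^ (s - 1)) u)) := by
    refine tendsto_integral_filter_of_dominated_convergence
      (fun u => exp (L + 1) * (exp (-u) * u ^ (s - 1))) ?_ ?_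
      ((GammaIntegral_convergent hs).const_mul _) ?_
    · exact Eventually.of_forall fun k => (by fun_prop : Measurable _).aestronglyMeasurable
    · filter_upwards [hR.eventually_ge_atTop 1,
        hv.eventually (eventually_le_nhds (lt_add_one L))] with k hRk hvk
      refine (ae_restrict_iff' measurableSet_Ioi).2 (ae_of_all _ fun u hu => ?_)
      have := rpow_nonneg (le_of_lt hu) (s - 1)
      rw [norm_of_nonneg (by positivity)]
      calc u ^ (s - 1) * (exp (R k * (u - v k)) + 1)⁻¹ ≤ u ^ (s - 1) * exp (L + 1 - u) :=
            mul_le_mul_of_nonneg_left (inv_exp_mul_sub_add_one_le hRk hvk) this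
        _ = exp (L + 1) * (exp (-u) * u ^ (s - 1)) := by
            rw [sub_eq_add_neg (L + 1), exp_add]; ring
    · filter_upwards [ae_restrict_mem measurableSet_Ioi, ae_restrict_of_ae (volume.ae_ne L)]
        with u hu huL
      convert (tendsto_inv_exp_mul_add_one hR (tendsto_const_nhds.sub hv)
        (sub_ne_zero.2 huL)).const_mul (u ^ (s - 1)) using 2
      simp only [indicator, mem_Iio, lt_max_iff, sub_neg, hu.out.not_gt, or_false]
      split_ifs <;> simp
  rw [integral_indicator_Iio_rpow hs (le_max_right L 0)] at hlim
  have hΓ := Gamma_pos_of_pos hs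
  have hval : max L 0 ^ s / Gamma (s + 1) = 1 / Gamma s * (max L 0 ^ s / s) := by
    rw [Gamma_add_one hs.ne']
    field_simp
  rw [hval]
  refine (hlim.const_mul (1 / Gamma s)).congr' ?_
  filter_upwards [hR.eventually_gt_atTop 0] with k hk
  rw [fermi_mul_eq hk]
  field_simp

end Fermi

section Moment

variable {N : ℕ} {s : ℝ}

lemma nonneg_add_mul_cos_iff_le_Cab {a b θ : ℝ} (hb : 0 ≤ b) (hab : -b < a)
    (hθ : θ ∈ Icc 0 π) : 0 ≤ a + b * cos θ ↔ θ ≤ Cab a b := by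
  unfold Cab
  split_ifs with hba
  · simp only [hθ.2, iff_true]
    nlinarith [neg_one_le_cos θ]
  · have hb0 : 0 < b := by linarith
    have hcos : -(a / b) ≤ cos θ ↔ 0 ≤ a + b * cos θ := by
      rw [← neg_div, div_le_iff₀ hb0]
      constructor <;> intro h <;> linarith
    rw [← hcos]
    constructor
    · intro h
      simpa only [arccos_cos hθ.1 hθ.2] using arccos_le_arccos h
    · intro h
      have hy1 : -1 ≤ -(a / b) := by rw [← neg_div, le_div_iff₀ hb0]; linarith
      have hy2 : -(a / b) ≤ 1 := by rw [← neg_div, div_le_iff₀ hb0]; linarith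
      simpa only [cos_arccos hy1 hy2] using cos_le_cos_of_nonneg_of_le_pi hθ.1 (arccos_le_pi _) h

lemma Cab_mem_Icc (a b : ℝ) : Cab a b ∈ Icc 0 π := by
  unfold Cab
  split_ifs
  · exact ⟨pi_pos.le, le_rfl⟩
  · exact ⟨arccos_nonneg _, arccos_le_pi _⟩

noncomputable def posPartMoment (N : ℕ) (s a b : ℝ) : ℝ :=
  ∫ θ in (0 : ℝ)..π, cos (N * θ) * max (a + b * cos θ) 0 ^ s

lemma continuous_cos_mul_max_rpow (hs : 0 ≤ s) :
    Continuous fun q : (ℝ × ℝ) × ℝ => cos (N * q.2) * max (q.1.1 + q.1.2 * cos q.2) 0 ^ s :=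
  by fun_prop (disch := exact fun _ => Or.inr hs)

lemma continuous_posPartMoment (hs : 0 ≤ s) :
    Continuous fun p : ℝ × ℝ => posPartMoment N s p.1 p.2 :=
  intervalIntegral.continuous_parametric_intervalIntegral_of_continuous'
    (continuous_cos_mul_max_rpow hs) 0 π

lemma integral_Cab_eq_posPartMoment (hs : 0 < s) {a b : ℝ} (hb : 0 ≤ b) (hab : -b < a) :
    ∫ θ in (0 : ℝ)..Cab a b, cos (N * θ) * (a + b * cos θ) ^ s = posPartMoment N s a b := by
  obtain ⟨hC0, hCπ⟩ := Cab_mem_Icc a b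
  have hint (x y : ℝ) :
      IntervalIntegrable (fun θ => cos (N * θ) * max (a + b * cos θ) 0 ^ s) volume x y :=
    ((continuous_cos_mul_max_rpow (N := N) hs.le).comp
      (Continuous.prodMk_right (a, b))).intervalIntegrable x y
  rw [posPartMoment, ← intervalIntegral.integral_add_adjacent_intervals (hint 0 _) (hint _ π),
    intervalIntegral.integral_zero_ae (a := Cab a b), add_zero]
  · refine intervalIntegral.integral_congr fun θ hθ => ?_
    rw [uIcc_of_le hC0] at hθ
    simp only [max_eq_left ((nonneg_add_mul_cos_iff_le_Cab hb hab
      ⟨hθ.1, hθ.2.trans hCπ⟩).2 hθ.2)]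
  · refine ae_of_all _ fun θ hθ => ?_
    rw [uIoc_of_le hCπ] at hθ
    have hneg : a + b * cos θ < 0 := not_le.1 fun h =>
      ((nonneg_add_mul_cos_iff_le_Cab hb hab ⟨hC0.trans hθ.1.le, hθ.2⟩).1 h).not_gt hθ.1
    rw [max_eq_right hneg.le, zero_rpow hs.ne', mul_zero]

lemma posPartMoment_mul {R : ℝ} (hR : 0 ≤ R) (a b : ℝ) :
    posPartMoment N s (R * a) (R * b) = R ^ s * posPartMoment N s a b := by
  rw [posPartMoment, posPartMoment, ← intervalIntegral.integral_const_mul]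
  congr 1 with θ
  rw [show R * a + R * b * cos θ = R * (a + b * cos θ) by ring, ← mul_zero R,
    ← mul_max_of_nonneg _ _ hR, mul_rpow hR (le_max_right _ _), mul_zero]
  ring

lemma cos_add_pi_div_four (ψ : ℝ) : cos (ψ + π / 4) = √2 / 2 * (cos ψ - sin ψ) := by
  rw [cos_add, cos_pi_div_four, sin_pi_div_four]
  ring

lemma sin_add_pi_div_four (ψ : ℝ) : sin (ψ + π / 4) = √2 / 2 * (cos ψ + sin ψ) := by
  rw [sin_add, cos_pi_div_four, sin_pi_div_four]
  ring

lemma cos_add_sin_pos {ψ : ℝ} (hψ : ψ ∈ Ico 0 (3 * π / 4)) : 0 < cos ψ + sin ψ := by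
  have hsin : 0 < sin (ψ + π / 4) :=
    sin_pos_of_pos_of_lt_pi (by linarith [pi_pos, hψ.1]) (by linarith [hψ.2])
  rw [sin_add_pi_div_four] at hsin
  exact pos_of_mul_pos_right hsin (by positivity)

lemma sin_le_cos_iff {ψ : ℝ} (hψ : ψ ∈ Ico 0 (3 * π / 4)) : sin ψ ≤ cos ψ ↔ ψ ≤ π / 4 := by
  have hsqrt : (0 : ℝ) < √2 / 2 := by positivity
  rw [← sub_nonneg, ← mul_nonneg_iff_of_pos_left hsqrt, ← cos_add_pi_div_four]
  constructor
  · intro h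
    by_contra! hlt
    exact (cos_neg_of_pi_div_two_lt_of_lt (by linarith) (by linarith [hψ.2])).not_ge h
  · intro h
    exact cos_nonneg_of_mem_Icc ⟨by linarith [pi_pos, hψ.1], by linarith⟩

lemma Cpsi_eq_Cab {ψ : ℝ} (hψ : ψ ∈ Ico 0 (3 * π / 4)) : Cpsi ψ = Cab (cos ψ) (sin ψ) := by
  simp only [Cpsi, Cab, sin_le_cos_iff hψ]

lemma calF_eq_posPartMoment (hs : 0 < s) {ψ : ℝ} (hψ : ψ ∈ Ico 0 (3 * π / 4)) :
    calF N s ψ = 1 / (π * Gamma (s + 1)) * posPartMoment N s (cos ψ) (sin ψ) := by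
  rw [calF, Cpsi_eq_Cab hψ, integral_Cab_eq_posPartMoment hs
    (sin_nonneg_of_nonneg_of_le_pi hψ.1 (by linarith [pi_pos, hψ.2]))
    (by linarith [cos_add_sin_pos hψ])]

end Moment

section Asymptotics

variable {N : ℕ} {s : ℝ} {ι : Type*} {l : Filter ι} {A B R : ι → ℝ} {a b : ℝ}

lemma tendsto_calI_div_rpow (hs : 0 < s) [l.IsCountablyGenerated] (hR : Tendsto R l atTop)
    (hdir : Tendsto (fun k => (A k / R k, B k / R k)) l (𝓝 (a, b))) :
    Tendsto (fun k => calI N s (A k) (B k) / R k ^ s) l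
      (𝓝 (1 / (π * Gamma (s + 1)) * posPartMoment N s a b)) := by
  set M := |a| + |b| + 1
  have hM : ∀ᶠ k in l, |A k / R k| + |B k / R k| ≤ M :=
    (((continuous_abs.comp continuous_fst).add (continuous_abs.comp continuous_snd)).tendsto
      (a, b) |>.comp hdir).eventually (eventually_le_nhds (lt_add_one _))
  have hscale : ∀ᶠ k in l, ∀ θ, A k + B k * cos θ = R k * (A k / R k + B k / R k * cos θ) := by
    filter_upwards [hR.eventually_gt_atTop 0] with k hk θ
    field_simp
  have hdom : Tendsto
      (fun k => ∫ θ in (0 : ℝ)..π, cos (N * θ) * (fermi s (A k + B k * cos θ) / R k ^ s))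
      l (𝓝 (∫ θ in (0 : ℝ)..π, cos (N * θ) * (max (a + b * cos θ) 0 ^ s / Gamma (s + 1)))) := by
    refine intervalIntegral.tendsto_integral_filter_of_dominated_convergence (fun _ => exp M)
      (Eventually.of_forall fun k => ?_) ?_ intervalIntegrable_const ?_
    · exact ((by fun_prop : Measurable fun θ : ℝ => cos (N * θ)).mul
        (((fermi_mono hs).measurable.comp (by fun_prop)).div_const _)).aestronglyMeasurable
    · filter_upwards [hR.eventually_ge_atTop 1, hM, hscale] with k hRk hMk hk
      refine ae_of_all _ fun θ _ => ?_
      have hv : A k / R k + B k / R k * cos θ ≤ M := by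
        have : B k / R k * cos θ ≤ |B k / R k| := (le_abs_self _).trans (by
          rw [abs_mul]; exact mul_le_of_le_one_right (abs_nonneg _) (abs_cos_le_one θ))
        linarith [le_abs_self (A k / R k)]
      have hRs : 0 < R k ^ s := rpow_pos_of_pos (by linarith) s
      rw [norm_mul, norm_div, norm_of_nonneg (fermi_nonneg hs _), norm_of_nonneg hRs.le, hk θ]
      calc ‖cos (N * θ)‖ * (fermi s (R k * _) / R k ^ s) ≤ 1 * exp M :=
            mul_le_mul (abs_cos_le_one _) ((div_le_iff₀ hRs).2 (fermi_mul_le hs hRk hv))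
              (div_nonneg (fermi_nonneg hs _) hRs.le) zero_le_one
        _ = exp M := one_mul _
    · refine ae_of_all _ fun θ _ => ?_
      have hv : Tendsto (fun k => A k / R k + B k / R k * cos θ) l (𝓝 (a + b * cos θ)) :=
        ((continuous_fst.add (continuous_snd.mul continuous_const)).tendsto (a, b)).comp hdir
      refine ((tendsto_fermi_mul_div_rpow hs hR hv).const_mul _).congr' ?_
      filter_upwards [hscale] with k hk
      rw [hk θ]
  convert hdom.const_mul (1 / π) using 1
  · funext k
    rw [calI, mul_div_assoc, ← intervalIntegral.integral_div]
    simp only [mul_div_assoc]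
  · simp only [posPartMoment, ← mul_div_assoc, intervalIntegral.integral_div]
    congr 1
    ring

lemma tendsto_integral_Cab_div_rpow (hs : 0 < s) (hB : ∀ᶠ k in l, 0 ≤ B k)
    (hR : Tendsto R l atTop) (hdir : Tendsto (fun k => (A k / R k, B k / R k)) l (𝓝 (a, b)))
    (hab : -b < a) :
    Tendsto (fun k => (∫ θ in (0 : ℝ)..Cab (A k) (B k), cos (N * θ) * (A k + B k * cos θ) ^ s)
      / R k ^ s) l (𝓝 (posPartMoment N s a b)) := by
  have hpos : ∀ᶠ k in l, 0 < A k / R k + B k / R k :=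
    ((continuous_fst.add continuous_snd).tendsto (a, b) |>.comp hdir).eventually
      (eventually_gt_nhds (show 0 < a + b by linarith))
  refine ((continuous_posPartMoment hs.le).tendsto (a, b) |>.comp hdir).congr' ?_
  filter_upwards [hR.eventually_gt_atTop 0, hB, hpos] with k hRk hBk hk
  rw [← add_div, div_pos_iff_of_pos_right hRk] at hk
  rw [Function.comp_apply, integral_Cab_eq_posPartMoment hs hBk (by linarith),
    eq_div_iff (rpow_pos_of_pos hRk s).ne', mul_comm, ← posPartMoment_mul hRk.le,
    mul_div_cancel₀ _ hRk.ne', mul_div_cancel₀ _ hRk.ne']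

end Asymptotics

/-- Degenerate-limit asymptotics: if `R_k = √(A_k²+B_k²) → ∞` and
`(A_k/R_k, B_k/R_k) → (cos ψ, sin ψ)` with `ψ ∈ [0, 3π/4)` and `𝓕_N^s(ψ) ≠ 0`,
then `𝓘_N^s(A_k,B_k) / D_k → 1`, where
`D_k = (1/(πΓ(s+1))) ∫₀^{C(A_k,B_k)} cos(Nθ)(A_k + B_k cos θ)^s dθ`. -/
theorem calI_asymptotic_degenerate (s : ℝ) (hs : 0 < s) (N : ℕ) (A B : ℕ → ℝ) (ψ : ℝ)
    (hB : ∀ k, 0 ≤ B k)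
    (hR : Tendsto (fun k => Real.sqrt ((A k) ^ 2 + (B k) ^ 2)) atTop atTop)
    (hdir : Tendsto
      (fun k => (A k / Real.sqrt ((A k) ^ 2 + (B k) ^ 2),
                 B k / Real.sqrt ((A k) ^ 2 + (B k) ^ 2)))
      atTop (nhds (Real.cos ψ, Real.sin ψ)))
    (hψ : ψ ∈ Set.Ico (0 : ℝ) (3 * Real.pi / 4))
    (hF : calF N s ψ ≠ 0) :
    Tendsto (fun k => calI N s (A k) (B k) /
      ((1 / (Real.pi * Real.Gamma (s + 1))) *
        ∫ θ in (0 : ℝ)..Cab (A k) (B k), Real.cos (N * θ) * (A k + B k * Real.cos θ) ^ s))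
      atTop (nhds 1) := by
  have hI := tendsto_calI_div_rpow (N := N) hs hR hdir
  have hD := (tendsto_integral_Cab_div_rpow (N := N) hs (Eventually.of_forall hB) hR hdir
    (by linarith [cos_add_sin_pos hψ])).const_mul (1 / (π * Gamma (s + 1)))
  rw [← calF_eq_posPartMoment hs hψ] at hI hD
  have hlim := hI.div hD hF
  rw [div_self hF] at hlim
  refine hlim.congr' ?_
  filter_upwards [hR.eventually_gt_atTop 0] with k hk
  rw [Pi.div_apply, ← mul_div_assoc, div_div_div_cancel_right₀ (rpow_pos_of_pos hk s).ne']
end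

section
/- Define Q(A,B) = ( 𝓘₀¹(A,B) − 𝓘₂¹(A,B) ) / ( 2 𝓘₀²(A,B) ) and Q_⊥(A,B) = ( 𝓘₀¹(A,B) + 𝓘₂¹(A,B) ) / ( 2 𝓘₀²(A,B) ). Then for every A ∈ ℝ and B ≥ 0 one has 0 < Q(A,B) < 1/2 and 0 < Q_⊥(A,B) < 1 − Q(A,B). -/
open MeasureTheory Set

/-!
`φ₁` is the softplus function `log (1 + eˣ)`, and an integration by parts gives
`φ₂(x) = ∫₀^∞ φ₁(x - t) dt`; since softplus exceeds its own derivative (the logistic function),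
`φ₁ < φ₂` pointwise. Since `cos 2θ < 1` on `(0, π)`, `𝓘₂¹ < 𝓘₀¹`. The remaining input is
`0 ≤ 𝓘₂¹`: the reflection `θ ↦ π - θ` replaces `φ₁(A + B c)` by
`g(c) = φ₁(A + B c) + φ₁(A - B c) = log (1 + e^{2A} + 2 e^A cosh (B c))`, which is increasing in
`|c|`, and the shift `θ ↦ θ + π/2` turns `∫ cos 2θ g(cos θ)` into `-∫ cos 2θ g(sin θ)`, so twice
the integral is `∫ cos 2θ (g(cos θ) - g(sin θ)) ≥ 0`, pointwise because
`cos 2θ = cos² θ - sin² θ`. Then `0 ≤ 𝓘₂¹ < 𝓘₀¹ < 𝓘₀²` gives all four inequalities.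
-/
open Filter Topology Real

noncomputable def softplus (x : ℝ) : ℝ := log (1 + exp x)

lemma softplus_pos (x : ℝ) : 0 < softplus x :=
  log_pos (by linarith [exp_pos x])

lemma softplus_le_exp (x : ℝ) : softplus x ≤ exp x := by
  rw [softplus]
  linarith [log_le_sub_one_of_pos (by positivity : 0 < 1 + exp x)]

lemma exp_div_one_add_exp_lt_softplus (x : ℝ) : exp x / (1 + exp x) < softplus x := by
  have h1 : 0 < 1 + exp x := by positivity
  have hne : (1 + exp x)⁻¹ ≠ 1 := inv_ne_one.mpr (by linarith [exp_pos x])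
  have := log_lt_sub_one_of_pos (inv_pos.mpr h1) hne
  rw [log_inv] at this
  have h2 : exp x / (1 + exp x) = 1 - (1 + exp x)⁻¹ := by field_simp; ring
  rw [h2, softplus]
  linarith

@[fun_prop]
lemma continuous_softplus : Continuous softplus :=
  (by fun_prop : Continuous fun x => 1 + exp x).log fun x => by positivity

lemma hasDerivAt_softplus (x : ℝ) : HasDerivAt softplus (exp x / (1 + exp x)) x :=
  ((hasDerivAt_exp x).const_add 1).log (by positivity)

lemma tendsto_softplus_atBot : Tendsto softplus atBot (𝓝 0) :=
  squeeze_zero (fun x => (softplus_pos x).le) softplus_le_exp tendsto_exp_atBot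

lemma softplus_add_softplus_sub (A x : ℝ) :
    softplus (A + x) + softplus (A - x) = log (1 + exp (2 * A) + 2 * exp A * cosh x) := by
  rw [softplus, softplus, ← log_mul (by positivity) (by positivity), cosh_eq]
  congr 1
  simp only [exp_add, exp_sub, show 2 * A = A + A by ring, exp_neg]
  field_simp
  ring

lemma softplus_add_softplus_sub_le (A : ℝ) {x y : ℝ} (h : |x| ≤ |y|) :
    softplus (A + x) + softplus (A - x) ≤ softplus (A + y) + softplus (A - y) := by
  rw [softplus_add_softplus_sub, softplus_add_softplus_sub]
  gcongr
  exact cosh_le_cosh.mpr h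

lemma one_div_exp_sub_add_one (x t : ℝ) :
    1 / (exp (t - x) + 1) = exp (x - t) / (1 + exp (x - t)) := by
  rw [show t - x = -(x - t) by ring, exp_neg]
  field_simp

lemma one_div_exp_sub_add_one_le (x t : ℝ) : 1 / (exp (t - x) + 1) ≤ exp (x - t) := by
  rw [one_div_exp_sub_add_one]
  exact div_le_self (exp_pos _).le (by linarith [exp_pos (x - t)])

lemma integrableOn_exp_sub (x a : ℝ) : IntegrableOn (fun t => exp (x - t)) (Ioi a) := by
  refine IntegrableOn.congr_fun ((exp_neg_integrableOn_Ioi a one_pos).const_mul (exp x))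
    (fun t _ => ?_) measurableSet_Ioi
  rw [neg_one_mul, sub_eq_add_neg, exp_add]

lemma integrableOn_mul_exp_sub (x : ℝ) : IntegrableOn (fun t => t * exp (x - t)) (Ioi 0) := by
  have := (GammaIntegral_convergent (by norm_num : (0 : ℝ) < 2)).const_mul (exp x)
  refine IntegrableOn.congr_fun this (fun t _ => ?_) measurableSet_Ioi
  norm_num [sub_eq_add_neg, exp_add]
  ring

lemma integrableOn_of_le_exp_sub {f : ℝ → ℝ} (x a : ℝ) (hf : Continuous f)
    (hf0 : ∀ t, 0 ≤ f t) (hle : ∀ t, f t ≤ exp (x - t)) : IntegrableOn f (Ioi a) :=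
  (integrableOn_exp_sub x a).mono' hf.aestronglyMeasurable.restrict
    (Eventually.of_forall fun t => by rw [norm_of_nonneg (hf0 t)]; exact hle t)

lemma integrableOn_one_div_exp_sub_add_one (x a : ℝ) :
    IntegrableOn (fun t => 1 / (exp (t - x) + 1)) (Ioi a) :=
  integrableOn_of_le_exp_sub x a (by fun_prop (disch := intro; positivity))
    (fun t => by positivity) (one_div_exp_sub_add_one_le x)

lemma integrableOn_softplus_sub (x a : ℝ) : IntegrableOn (fun t => softplus (x - t)) (Ioi a) :=
  integrableOn_of_le_exp_sub x a (by fun_prop)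
    (fun t => (softplus_pos _).le) (fun t => softplus_le_exp _)

lemma tendsto_softplus_sub_atTop (x : ℝ) : Tendsto (fun t => softplus (x - t)) atTop (𝓝 0) :=
  tendsto_softplus_atBot.comp (tendsto_atBot_add_const_left atTop x tendsto_neg_atTop_atBot)

lemma hasDerivAt_neg_softplus_sub (x t : ℝ) :
    HasDerivAt (fun t => -softplus (x - t)) (1 / (exp (t - x) + 1)) t := by
  rw [one_div_exp_sub_add_one]
  exact ((hasDerivAt_softplus (x - t)).comp_const_sub x t).neg.congr_deriv (neg_neg _)

lemma integral_one_div_exp_sub_add_one (x a : ℝ) :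
    ∫ t in Ioi a, 1 / (exp (t - x) + 1) = softplus (x - a) := by
  rw [integral_Ioi_of_hasDerivAt_of_tendsto' (fun t _ => hasDerivAt_neg_softplus_sub x t)
    (integrableOn_one_div_exp_sub_add_one x a) (tendsto_softplus_sub_atTop x).neg,
    neg_zero, zero_sub, neg_neg]

lemma fermi_one_eq_softplus : fermi 1 = softplus := by
  ext x
  simp only [fermi, Gamma_one, sub_self, rpow_zero, integral_one_div_exp_sub_add_one, sub_zero,
    div_one, one_mul]

lemma tendsto_mul_softplus_sub_atTop (x : ℝ) :
    Tendsto (fun t => t * softplus (x - t)) atTop (𝓝 0) := by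
  have hlim : Tendsto (fun t => exp x * (t ^ 1 * exp (-t))) atTop (𝓝 0) := by
    simpa using (tendsto_pow_mul_exp_neg_atTop_nhds_zero 1).const_mul (exp x)
  refine squeeze_zero' ?_ ?_ hlim <;> filter_upwards [eventually_ge_atTop 0] with t ht
  · exact mul_nonneg ht (softplus_pos _).le
  · calc t * softplus (x - t) ≤ t * exp (x - t) := by gcongr; exact softplus_le_exp _
      _ = exp x * (t ^ 1 * exp (-t)) := by rw [pow_one, sub_eq_add_neg, exp_add]; ring

lemma fermi_two_eq_integral_softplus (x : ℝ) : fermi 2 x = ∫ t in Ioi 0, softplus (x - t) := by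
  have hfermi : fermi 2 x = ∫ t in Ioi 0, t * (1 / (exp (t - x) + 1)) := by
    norm_num [fermi, Gamma_two, div_eq_mul_inv]
  have hmul : IntegrableOn (fun t => t * (1 / (exp (t - x) + 1))) (Ioi 0) := by
    have hcont : Continuous fun t => t * (1 / (exp (t - x) + 1)) := by
      fun_prop (disch := intro; positivity)
    refine (integrableOn_mul_exp_sub x).mono' hcont.aestronglyMeasurable.restrict ?_
    filter_upwards [ae_restrict_mem measurableSet_Ioi] with t (ht : 0 < t)
    rw [norm_of_nonneg (by positivity)]
    exact mul_le_mul_of_nonneg_left (one_div_exp_sub_add_one_le x t) ht.le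
  have hzero : Tendsto (fun t => t * -softplus (x - t)) (𝓝[>] 0) (𝓝 0) := by
    have : Continuous fun t => t * -softplus (x - t) := by fun_prop
    simpa using (this.tendsto 0).mono_left nhdsWithin_le_nhds
  have := integral_Ioi_mul_deriv_eq_deriv_mul (u := fun t => t) (u' := fun _ => 1)
    (fun t _ => hasDerivAt_id' t) (fun t _ => hasDerivAt_neg_softplus_sub x t) hmul
    (by simpa [Pi.mul_def] using (integrableOn_softplus_sub x 0).neg) hzero
    (by simpa [Pi.mul_def] using (tendsto_mul_softplus_sub_atTop x).neg)
  rw [hfermi, this]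
  simp [integral_neg]

lemma continuous_fermi_two : Continuous (fermi 2) := by
  rw [continuous_iff_continuousAt]
  intro x
  rw [show fermi 2 = fun y => ∫ t in Ioi 0, softplus (y - t) from
    funext fermi_two_eq_integral_softplus]
  refine continuousAt_of_dominated (bound := fun t => exp (x + 1 - t))
    (Eventually.of_forall fun y =>
      (by fun_prop : Continuous fun t => softplus (y - t)).aestronglyMeasurable)
    ?_ (integrableOn_exp_sub (x + 1) 0)
    (Eventually.of_forall fun t => by fun_prop)
  filter_upwards [eventually_lt_nhds (lt_add_one x)] with y hy
  refine Eventually.of_forall fun t => ?_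
  rw [norm_of_nonneg (softplus_pos _).le]
  exact (softplus_le_exp _).trans (exp_le_exp.mpr (by linarith))

lemma fermi_one_lt_fermi_two (x : ℝ) : fermi 1 x < fermi 2 x := by
  have hpt : ∀ t, 0 < softplus (x - t) - 1 / (exp (t - x) + 1) := fun t => by
    rw [one_div_exp_sub_add_one, sub_pos]
    exact exp_div_one_add_exp_lt_softplus _
  have hpos : 0 < ∫ t in Ioi 0, (softplus (x - t) - 1 / (exp (t - x) + 1)) := by
    rw [setIntegral_pos_iff_support_of_nonneg_ae (Eventually.of_forall fun t => (hpt t).le)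
      ((integrableOn_softplus_sub x 0).sub (integrableOn_one_div_exp_sub_add_one x 0)),
      Function.support_eq_univ fun t => (hpt t).ne', univ_inter, volume_Ioi]
    exact ENNReal.zero_lt_top
  rw [integral_sub (integrableOn_softplus_sub x 0) (integrableOn_one_div_exp_sub_add_one x 0),
    integral_one_div_exp_sub_add_one, sub_zero, ← fermi_two_eq_integral_softplus,
    ← fermi_one_eq_softplus, sub_pos] at hpos
  exact hpos

lemma integral_cos_two_mul_mul_comp_cos_eq_neg_sin {g : ℝ → ℝ} (hg : ∀ x, g (-x) = g x) :
    ∫ θ in 0..π, cos (2 * θ) * g (cos θ) = -∫ θ in 0..π, cos (2 * θ) * g (sin θ) := by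
  set F : ℝ → ℝ := fun θ => cos (2 * θ) * g (sin θ)
  have hper : Function.Periodic F π := fun θ => by
    simp only [F, mul_add, cos_add_two_pi, sin_add_pi, hg]
  have hshift : ∀ θ, cos (2 * θ) * g (cos θ) = -F (θ + π / 2) := fun θ => by
    simp only [F, sin_add_pi_div_two, mul_add, mul_div_cancel₀ π two_ne_zero, cos_add_pi]
    ring
  simp only [hshift]
  rw [intervalIntegral.integral_neg, intervalIntegral.integral_comp_add_right F, zero_add,
    add_comm π, hper.intervalIntegral_add_eq (π / 2) 0, zero_add]

lemma integral_cos_two_mul_mul_comp_cos_eq_half {h : ℝ → ℝ} (hh : Continuous h) :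
    ∫ θ in 0..π, cos (2 * θ) * h (cos θ) =
      (∫ θ in 0..π, cos (2 * θ) * (h (cos θ) + h (-cos θ))) / 2 := by
  have hrefl : ∫ θ in 0..π, cos (2 * θ) * h (-cos θ) = ∫ θ in 0..π, cos (2 * θ) * h (cos θ) := by
    simpa only [sub_self, sub_zero, mul_sub, cos_two_pi_sub, cos_pi_sub] using
      intervalIntegral.integral_comp_sub_left (fun θ => cos (2 * θ) * h (cos θ)) π
        (a := 0) (b := π)
  simp_rw [mul_add]
  rw [intervalIntegral.integral_add, hrefl, add_self_div_two]
  all_goals exact (by fun_prop : Continuous _).intervalIntegrable _ _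

lemma integral_cos_two_mul_mul_comp_cos_nonneg_of_abs_mono {g : ℝ → ℝ} (hg : Continuous g)
    (hmono : ∀ s c, |s| ≤ |c| → g s ≤ g c) :
    0 ≤ ∫ θ in 0..π, cos (2 * θ) * g (cos θ) := by
  have heven : ∀ x, g (-x) = g x := fun x =>
    le_antisymm (hmono _ _ (abs_neg x).le) (hmono _ _ (abs_neg x).ge)
  have hpt : ∀ θ, 0 ≤ cos (2 * θ) * (g (cos θ) - g (sin θ)) := fun θ => by
    rw [cos_two_mul']
    rcases le_total (sin θ ^ 2) (cos θ ^ 2) with h | h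
    · exact mul_nonneg (sub_nonneg.2 h) (sub_nonneg.2 (hmono _ _ (sq_le_sq.1 h)))
    · exact mul_nonneg_of_nonpos_of_nonpos (sub_nonpos.2 h)
        (sub_nonpos.2 (hmono _ _ (sq_le_sq.1 h)))
  have := intervalIntegral.integral_nonneg (μ := volume) pi_pos.le fun θ _ => hpt θ
  simp_rw [mul_sub] at this
  rw [intervalIntegral.integral_sub ((by fun_prop : Continuous _).intervalIntegrable _ _)
      ((by fun_prop : Continuous _).intervalIntegrable _ _)] at this
  linarith [integral_cos_two_mul_mul_comp_cos_eq_neg_sin heven]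

lemma integral_cos_two_mul_mul_comp_cos_nonneg {h : ℝ → ℝ} (hh : Continuous h)
    (hmono : ∀ s c, |s| ≤ |c| → h s + h (-s) ≤ h c + h (-c)) :
    0 ≤ ∫ θ in 0..π, cos (2 * θ) * h (cos θ) := by
  rw [integral_cos_two_mul_mul_comp_cos_eq_half hh]
  exact div_nonneg (integral_cos_two_mul_mul_comp_cos_nonneg_of_abs_mono
    (g := fun c => h c + h (-c)) (by fun_prop)
    fun s c hsc => by simpa only [neg_neg] using hmono s c hsc) zero_le_two

lemma integral_cos_two_mul_mul_softplus_nonneg (A B : ℝ) :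
    0 ≤ ∫ θ in 0..π, cos (2 * θ) * softplus (A + B * cos θ) := by
  refine integral_cos_two_mul_mul_comp_cos_nonneg (h := fun c => softplus (A + B * c))
    (by fun_prop) fun s c hsc => ?_
  simp only [mul_neg, ← sub_eq_add_neg]
  exact softplus_add_softplus_sub_le A (by rw [abs_mul, abs_mul]; gcongr)

lemma integral_cos_two_mul_mul_lt_integral {f : ℝ → ℝ} (hf : Continuous f)
    (hpos : ∀ θ, 0 < f θ) : ∫ θ in 0..π, cos (2 * θ) * f θ < ∫ θ in 0..π, f θ := by
  refine intervalIntegral.integral_lt_integral_of_continuousOn_of_le_of_exists_lt pi_pos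
    (by fun_prop) hf.continuousOn (fun θ _ => ?_)
    ⟨π / 2, ⟨by positivity, by linarith [pi_pos]⟩, ?_⟩
  · exact mul_le_of_le_one_left (hpos θ).le (cos_le_one _)
  · rw [mul_div_cancel₀ π two_ne_zero, cos_pi]
    linarith [hpos (π / 2)]

lemma calI_two_lt_calI_zero {s : ℝ} (hcont : Continuous (fermi s)) (hpos : ∀ x, 0 < fermi s x)
    (A B : ℝ) : calI 2 s A B < calI 0 s A B := by
  simp only [calI, Nat.cast_ofNat, Nat.cast_zero, zero_mul, cos_zero, one_mul]
  exact mul_lt_mul_of_pos_left (integral_cos_two_mul_mul_lt_integral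
    (hcont.comp (by fun_prop)) fun θ => hpos _) (by positivity)

lemma calI_zero_lt_calI_zero {s s' : ℝ} (hs : Continuous (fermi s)) (hs' : Continuous (fermi s'))
    (hlt : ∀ x, fermi s x < fermi s' x) (A B : ℝ) : calI 0 s A B < calI 0 s' A B := by
  simp only [calI, Nat.cast_zero, zero_mul, cos_zero, one_mul]
  refine mul_lt_mul_of_pos_left ?_ (by positivity)
  exact intervalIntegral.integral_lt_integral_of_continuousOn_of_le_of_exists_lt pi_pos
    (hs.comp (by fun_prop)).continuousOn (hs'.comp (by fun_prop)).continuousOn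
    (fun θ _ => (hlt _).le) ⟨0, ⟨le_rfl, pi_pos.le⟩, hlt _⟩

lemma calI_two_one_nonneg (A B : ℝ) : 0 ≤ calI 2 1 A B := by
  simp only [calI, Nat.cast_ofNat, fermi_one_eq_softplus]
  exact mul_nonneg (by positivity) (integral_cos_two_mul_mul_softplus_nonneg A B)

theorem Q_bounds_general (A B : ℝ) :
    0 < (calI 0 1 A B - calI 2 1 A B) / (2 * calI 0 2 A B) ∧
    (calI 0 1 A B - calI 2 1 A B) / (2 * calI 0 2 A B) < 1 / 2 ∧
    0 < (calI 0 1 A B + calI 2 1 A B) / (2 * calI 0 2 A B) ∧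
    (calI 0 1 A B + calI 2 1 A B) / (2 * calI 0 2 A B)
      < 1 - (calI 0 1 A B - calI 2 1 A B) / (2 * calI 0 2 A B) := by
  have hcont₁ : Continuous (fermi 1) := fermi_one_eq_softplus ▸ continuous_softplus
  have hI21_nonneg : 0 ≤ calI 2 1 A B := calI_two_one_nonneg A B
  have hI21_lt_I01 : calI 2 1 A B < calI 0 1 A B :=
    calI_two_lt_calI_zero hcont₁ (fermi_one_eq_softplus ▸ softplus_pos) A B
  have hI01_lt_I02 : calI 0 1 A B < calI 0 2 A B :=
    calI_zero_lt_calI_zero hcont₁ continuous_fermi_two fermi_one_lt_fermi_two A B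
  have hden : 0 < 2 * calI 0 2 A B := by linarith
  refine ⟨div_pos (by linarith) hden, (div_lt_iff₀ hden).2 (by linarith),
    div_pos (by linarith) hden, ?_⟩
  rw [lt_sub_iff_add_lt, ← add_div, div_lt_one hden]
  linarith

/-- With `Q = (𝓘₀¹ - 𝓘₂¹)/(2𝓘₀²)` and `Q_⊥ = (𝓘₀¹ + 𝓘₂¹)/(2𝓘₀²)`,
one has `0 < Q < 1/2` and `0 < Q_⊥ < 1 - Q`. -/
theorem Q_bounds (A B : ℝ) (hB : 0 ≤ B) :
    0 < (calI 0 1 A B - calI 2 1 A B) / (2 * calI 0 2 A B) ∧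
    (calI 0 1 A B - calI 2 1 A B) / (2 * calI 0 2 A B) < 1 / 2 ∧
    0 < (calI 0 1 A B + calI 2 1 A B) / (2 * calI 0 2 A B) ∧
    (calI 0 1 A B + calI 2 1 A B) / (2 * calI 0 2 A B)
      < 1 - (calI 0 1 A B - calI 2 1 A B) / (2 * calI 0 2 A B) :=
  Q_bounds_general A B
end

section
/- Define u(ψ) = 𝓕₁²(ψ)/𝓕₀²(ψ), Y(ψ) = (𝓕₀²(ψ)+𝓕₂²(ψ))/(2𝓕₀²(ψ)), Z(ψ) = (𝓕₀¹(ψ)−𝓕₂¹(ψ))/(2√(2𝓕₀²(ψ))) and Z_⊥(ψ) = (𝓕₀¹(ψ)+𝓕₂¹(ψ))/(2√(2𝓕₀²(ψ))). Then, as ψ → 0⁺: Y(ψ) = 1/2 + u(ψ)²/8 + O(u(ψ)⁴), Z(ψ) = 1/2 − u(ψ)²/8 + O(u(ψ)⁴), and Z_⊥(ψ) = 1/2 − u(ψ)²/8 + O(u(ψ)⁴). -/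
open MeasureTheory Set Filter Asymptotics

/-- `u(ψ) = 𝓕₁²(ψ)/𝓕₀²(ψ)`. -/
noncomputable def uFun (ψ : ℝ) : ℝ := calF 1 2 ψ / calF 0 2 ψ

/-- `Y(ψ) = (𝓕₀²(ψ)+𝓕₂²(ψ))/(2𝓕₀²(ψ))`. -/
noncomputable def Yfun (ψ : ℝ) : ℝ := (calF 0 2 ψ + calF 2 2 ψ) / (2 * calF 0 2 ψ)

/-- `Z(ψ) = (𝓕₀¹(ψ)-𝓕₂¹(ψ))/(2√(2𝓕₀²(ψ)))`. -/
noncomputable def Zfun (ψ : ℝ) : ℝ :=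
  (calF 0 1 ψ - calF 2 1 ψ) / (2 * Real.sqrt (2 * calF 0 2 ψ))

/-- `Z_⊥(ψ) = (𝓕₀¹(ψ)+𝓕₂¹(ψ))/(2√(2𝓕₀²(ψ)))`. -/
noncomputable def Zperp (ψ : ℝ) : ℝ :=
  (calF 0 1 ψ + calF 2 1 ψ) / (2 * Real.sqrt (2 * calF 0 2 ψ))

/-!
For `ψ ≤ π/4` the upper limit `C(ψ)` is `π`, the integrands are trigonometric polynomials in `θ`,
and with `c = cos ψ`, `s = sin ψ`, `a = c² + s²/2` one finds `𝓕₀² = a/2`, `𝓕₁² = sc/2`,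
`𝓕₂² = s²/8`, `𝓕₀¹ = c`, `𝓕₂¹ = 0`. Hence `u = sc/a`, `Y = 1/2 + s²/(8a)` and
`Z = Z_⊥ = c/(2√a)`, and the errors are explicit multiples of `u⁴`:
`Y - (1/2 + u²/8) = u⁴ a²/(16c⁴)` and `(1/2 - u²/8)² - Z² = u⁴ (4a² + c⁴)/(64c⁴)`,
with factors bounded as long as `c² ≥ 1/2`; the bound for `Z` follows from the second identity
since `(1/2 - u²/8) + Z ≥ 3/8`.
-/

open Real Topology

lemma hasDerivAt_sin_mul (k θ : ℝ) :
    HasDerivAt (fun x => sin (k * x)) (k * cos (k * θ)) θ := by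
  simpa [mul_comm] using ((hasDerivAt_id θ).const_mul k).sin

lemma integral_sq_add_mul_cos (c s : ℝ) :
    ∫ θ in (0:ℝ)..π, (c + s * cos θ) ^ 2 = π * (c ^ 2 + s ^ 2 / 2) := by
  have hF (θ : ℝ) : HasDerivAt (fun x => (c ^ 2 + s ^ 2 / 2) * x + 2 * s * c * sin x
      + s ^ 2 / 4 * sin (2 * x)) ((c + s * cos θ) ^ 2) θ := by
    refine ((((hasDerivAt_id θ).const_mul _).add ((hasDerivAt_sin θ).const_mul _)).add
      ((hasDerivAt_sin_mul 2 θ).const_mul _)).congr_deriv ?_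
    rw [cos_two_mul]; ring
  rw [intervalIntegral.integral_eq_sub_of_hasDerivAt (fun θ _ => hF θ)
    ((by fun_prop : Continuous _).intervalIntegrable _ _)]
  simp only [sin_pi, mul_zero, add_zero, sin_two_pi, sin_zero, sub_zero]
  ring

lemma integral_cos_mul_sq_add_mul_cos (c s : ℝ) :
    ∫ θ in (0:ℝ)..π, cos θ * (c + s * cos θ) ^ 2 = π * (s * c) := by
  have hF (θ : ℝ) : HasDerivAt (fun x => s * c * x + (c ^ 2 + 3 * s ^ 2 / 4) * sin x
      + s * c / 2 * sin (2 * x) + s ^ 2 / 12 * sin (3 * x)) (cos θ * (c + s * cos θ) ^ 2) θ := by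
    refine (((((hasDerivAt_id θ).const_mul _).add ((hasDerivAt_sin θ).const_mul _)).add
      ((hasDerivAt_sin_mul 2 θ).const_mul _)).add
      ((hasDerivAt_sin_mul 3 θ).const_mul _)).congr_deriv ?_
    rw [cos_two_mul, cos_three_mul]; ring
  rw [intervalIntegral.integral_eq_sub_of_hasDerivAt (fun θ _ => hF θ)
    ((by fun_prop : Continuous _).intervalIntegrable _ _)]
  have := sin_nat_mul_pi 3
  push_cast at this
  simp only [sin_pi, mul_zero, add_zero, sin_two_pi, this, sin_zero, sub_zero]
  ring

lemma integral_cos_two_mul_mul_sq_add_mul_cos (c s : ℝ) :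
    ∫ θ in (0:ℝ)..π, cos (2 * θ) * (c + s * cos θ) ^ 2 = π * (s ^ 2 / 4) := by
  have hF (θ : ℝ) : HasDerivAt (fun x => s ^ 2 / 4 * x + s * c * sin x
      + (c ^ 2 / 2 + s ^ 2 / 4) * sin (2 * x) + s * c / 3 * sin (3 * x)
      + s ^ 2 / 16 * sin (4 * x)) (cos (2 * θ) * (c + s * cos θ) ^ 2) θ := by
    refine ((((((hasDerivAt_id θ).const_mul _).add ((hasDerivAt_sin θ).const_mul _)).add
      ((hasDerivAt_sin_mul 2 θ).const_mul _)).add ((hasDerivAt_sin_mul 3 θ).const_mul _)).add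
      ((hasDerivAt_sin_mul 4 θ).const_mul _)).congr_deriv ?_
    rw [show (4:ℝ) * θ = 2 * (2 * θ) by ring, cos_two_mul (2 * θ), cos_three_mul, cos_two_mul]
    ring
  rw [intervalIntegral.integral_eq_sub_of_hasDerivAt (fun θ _ => hF θ)
    ((by fun_prop : Continuous _).intervalIntegrable _ _)]
  have h3 := sin_nat_mul_pi 3
  have h4 := sin_nat_mul_pi 4
  push_cast at h3 h4
  simp only [sin_pi, mul_zero, add_zero, sin_two_pi, h3, h4, sin_zero, sub_zero]
  ring

lemma integral_add_mul_cos (c s : ℝ) :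
    ∫ θ in (0:ℝ)..π, (c + s * cos θ) = π * c := by
  rw [intervalIntegral.integral_add ((by fun_prop : Continuous _).intervalIntegrable _ _)
    ((by fun_prop : Continuous _).intervalIntegrable _ _)]
  simp [integral_cos]

lemma integral_cos_two_mul_mul_add_mul_cos (c s : ℝ) :
    ∫ θ in (0:ℝ)..π, cos (2 * θ) * (c + s * cos θ) = 0 := by
  have hF (θ : ℝ) : HasDerivAt (fun x => c / 2 * sin (2 * x) + s / 2 * sin x
      + s / 6 * sin (3 * x)) (cos (2 * θ) * (c + s * cos θ)) θ := by
    refine ((((hasDerivAt_sin_mul 2 θ).const_mul _).add ((hasDerivAt_sin θ).const_mul _)).add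
      ((hasDerivAt_sin_mul 3 θ).const_mul _)).congr_deriv ?_
    rw [cos_two_mul, cos_three_mul]; ring
  rw [intervalIntegral.integral_eq_sub_of_hasDerivAt (fun θ _ => hF θ)
    ((by fun_prop : Continuous _).intervalIntegrable _ _)]
  have h3 := sin_nat_mul_pi 3
  push_cast at h3
  simp [sin_two_pi, h3]

lemma Cpsi_of_le {ψ : ℝ} (hψ : ψ ≤ π / 4) : Cpsi ψ = π := if_pos hψ

lemma Gamma_three : Gamma (2 + 1) = 2 := by
  rw [show (2:ℝ) + 1 = (2:ℕ) + 1 by norm_num, Gamma_nat_eq_factorial]; norm_num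

section Diffusive

variable {ψ : ℝ}

lemma calF_zero_two (hψ : ψ ≤ π / 4) : calF 0 2 ψ = (cos ψ ^ 2 + sin ψ ^ 2 / 2) / 2 := by
  simp only [calF, Cpsi_of_le hψ, Nat.cast_zero, zero_mul, cos_zero, one_mul, rpow_two,
    integral_sq_add_mul_cos, Gamma_three]
  field_simp

lemma calF_one_two (hψ : ψ ≤ π / 4) : calF 1 2 ψ = sin ψ * cos ψ / 2 := by
  simp only [calF, Cpsi_of_le hψ, Nat.cast_one, one_mul, rpow_two,
    integral_cos_mul_sq_add_mul_cos, Gamma_three]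
  field_simp

lemma calF_two_two (hψ : ψ ≤ π / 4) : calF 2 2 ψ = sin ψ ^ 2 / 8 := by
  simp only [calF, Cpsi_of_le hψ, Nat.cast_ofNat, rpow_two,
    integral_cos_two_mul_mul_sq_add_mul_cos, Gamma_three]
  field_simp; ring

lemma calF_zero_one (hψ : ψ ≤ π / 4) : calF 0 1 ψ = cos ψ := by
  simp only [calF, Cpsi_of_le hψ, Nat.cast_zero, zero_mul, cos_zero, one_mul, rpow_one,
    integral_add_mul_cos, one_add_one_eq_two, Gamma_two]
  field_simp

lemma calF_two_one (hψ : ψ ≤ π / 4) : calF 2 1 ψ = 0 := by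
  simp only [calF, Cpsi_of_le hψ, Nat.cast_ofNat, rpow_one,
    integral_cos_two_mul_mul_add_mul_cos, mul_zero]

lemma cos_sq_add_sin_sq_div_two_pos (ψ : ℝ) : 0 < cos ψ ^ 2 + sin ψ ^ 2 / 2 := by
  nlinarith [sin_sq_add_cos_sq ψ, sq_nonneg (sin ψ)]

lemma uFun_eq (hψ : ψ ≤ π / 4) :
    uFun ψ = sin ψ * cos ψ / (cos ψ ^ 2 + sin ψ ^ 2 / 2) := by
  rw [uFun, calF_one_two hψ, calF_zero_two hψ, div_div_div_cancel_right₀ two_ne_zero]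

lemma Yfun_eq (hψ : ψ ≤ π / 4) :
    Yfun ψ = 1 / 2 + sin ψ ^ 2 / (8 * (cos ψ ^ 2 + sin ψ ^ 2 / 2)) := by
  rw [Yfun, calF_zero_two hψ, calF_two_two hψ, mul_div_cancel₀ _ two_ne_zero, add_div,
    div_div_cancel_left' (cos_sq_add_sin_sq_div_two_pos ψ).ne', div_div, mul_comm]
  norm_num

lemma Zfun_eq (hψ : ψ ≤ π / 4) :
    Zfun ψ = cos ψ / (2 * √(cos ψ ^ 2 + sin ψ ^ 2 / 2)) := by
  rw [Zfun, calF_zero_one hψ, calF_two_one hψ, calF_zero_two hψ, sub_zero,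
    mul_div_cancel₀ _ two_ne_zero]

lemma Zperp_eq_Zfun (hψ : ψ ≤ π / 4) : Zperp ψ = Zfun ψ := by
  rw [Zperp, Zfun, calF_two_one hψ, add_zero, sub_zero]

end Diffusive

lemma abs_sub_le_abs_sq_sub_sq_div {x y m : ℝ} (hx : 0 ≤ x) (hm : 0 < m) (hy : m ≤ y) :
    |x - y| ≤ |x ^ 2 - y ^ 2| / m := by
  rw [le_div_iff₀ hm, sq_sub_sq, abs_mul, mul_comm]
  gcongr
  rw [abs_of_pos (by linarith)]
  linarith

section Algebra

variable {s c : ℝ}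

lemma abs_half_add_div_sub_le_pow_four (hsc : s ^ 2 + c ^ 2 = 1) (hc : 1 / 2 ≤ c ^ 2) :
    |1 / 2 + s ^ 2 / (8 * (c ^ 2 + s ^ 2 / 2)) - (1 / 2 + (s * c / (c ^ 2 + s ^ 2 / 2)) ^ 2 / 8)|
      ≤ (s * c / (c ^ 2 + s ^ 2 / 2)) ^ 4 := by
  set a := c ^ 2 + s ^ 2 / 2 with ha
  have hc0 : c ≠ 0 := by rintro rfl; norm_num at hc
  have ha0 : 0 < a := by positivity
  have herr : 1 / 2 + s ^ 2 / (8 * a) - (1 / 2 + (s * c / a) ^ 2 / 8)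
      = (s * c / a) ^ 4 * (a ^ 2 / (16 * c ^ 4)) := by
    rw [ha]; field_simp; ring
  have hfactor : a ^ 2 / (16 * c ^ 4) ≤ 1 := by
    rw [div_le_one (by positivity)]; nlinarith
  rw [herr, abs_of_nonneg (by positivity)]
  exact mul_le_of_le_one_right (by positivity) hfactor

lemma abs_div_two_sqrt_sub_le_pow_four (hsc : s ^ 2 + c ^ 2 = 1) (hc : 1 / 2 ≤ c ^ 2)
    (hc₀ : 0 ≤ c) :
    |c / (2 * √(c ^ 2 + s ^ 2 / 2)) - (1 / 2 - (s * c / (c ^ 2 + s ^ 2 / 2)) ^ 2 / 8)|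
      ≤ (s * c / (c ^ 2 + s ^ 2 / 2)) ^ 4 := by
  set a := c ^ 2 + s ^ 2 / 2 with ha
  set u := s * c / a with hu
  have hc0 : c ≠ 0 := by rintro rfl; norm_num at hc
  have ha0 : 0 < a := by positivity
  have ha1 : a ≤ 1 := by nlinarith
  have hu2 : u ^ 2 ≤ 1 := by
    rw [hu, div_pow, div_le_one (by positivity)]; nlinarith [sq_nonneg (s ^ 2 - c ^ 2)]
  have hsq : (c / (2 * √a)) ^ 2 - (1 / 2 - u ^ 2 / 8) ^ 2
      = -(u ^ 4 * ((4 * a ^ 2 + c ^ 4) / (64 * c ^ 4))) := by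
    rw [div_pow, mul_pow, sq_sqrt ha0.le, hu, ha]; field_simp; ring
  have hfactor : (4 * a ^ 2 + c ^ 4) / (64 * c ^ 4) ≤ 3 / 8 := by
    rw [div_le_iff₀ (by positivity)]; nlinarith
  calc |c / (2 * √a) - (1 / 2 - u ^ 2 / 8)|
      ≤ |(c / (2 * √a)) ^ 2 - (1 / 2 - u ^ 2 / 8) ^ 2| / (3 / 8) :=
        abs_sub_le_abs_sq_sub_sq_div (by positivity) (by norm_num) (by linarith)
    _ = u ^ 4 * ((4 * a ^ 2 + c ^ 4) / (64 * c ^ 4)) / (3 / 8) := by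
        rw [hsq, abs_neg, abs_of_nonneg (by positivity)]
    _ ≤ u ^ 4 := by
        rw [div_le_iff₀ (by norm_num)]
        exact mul_le_mul_of_nonneg_left hfactor (by positivity)

end Algebra

lemma eventually_nhds_zero_diffusive :
    ∀ᶠ ψ in 𝓝 (0:ℝ), ψ ≤ π / 4 ∧ 0 ≤ cos ψ ∧ 1 / 2 ≤ cos ψ ^ 2 := by
  have hcos : Tendsto cos (𝓝 0) (𝓝 1) := by simpa using continuous_cos.tendsto 0
  filter_upwards [eventually_le_nhds (by positivity : (0:ℝ) < π / 4),
    hcos.eventually_const_lt (by norm_num : (3:ℝ) / 4 < 1)] with ψ hψ hc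
  exact ⟨hψ, by linarith, by nlinarith⟩

lemma Yfun_sub_isBigO :
    (fun ψ => Yfun ψ - (1 / 2 + uFun ψ ^ 2 / 8)) =O[𝓝 0] fun ψ => uFun ψ ^ 4 := by
  refine IsBigO.of_bound' ?_
  filter_upwards [eventually_nhds_zero_diffusive] with ψ h
  obtain ⟨hψ, -, hc⟩ := h
  rw [Yfun_eq hψ, uFun_eq hψ, norm_eq_abs, norm_of_nonneg (by positivity)]
  exact abs_half_add_div_sub_le_pow_four (sin_sq_add_cos_sq ψ) hc

lemma Zfun_sub_isBigO :
    (fun ψ => Zfun ψ - (1 / 2 - uFun ψ ^ 2 / 8)) =O[𝓝 0] fun ψ => uFun ψ ^ 4 := by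
  refine IsBigO.of_bound' ?_
  filter_upwards [eventually_nhds_zero_diffusive] with ψ h
  obtain ⟨hψ, hc₀, hc⟩ := h
  rw [Zfun_eq hψ, uFun_eq hψ, norm_eq_abs, norm_of_nonneg (by positivity)]
  exact abs_div_two_sqrt_sub_le_pow_four (sin_sq_add_cos_sq ψ) hc hc₀

/-- As `ψ → 0⁺`: `Y = 1/2 + u²/8 + O(u⁴)`, `Z = 1/2 - u²/8 + O(u⁴)`,
`Z_⊥ = 1/2 - u²/8 + O(u⁴)`. -/
theorem YZ_expansion_diffusive :
    ((fun ψ => Yfun ψ - (1 / 2 + uFun ψ ^ 2 / 8)) =O[nhdsWithin 0 (Set.Ioi 0)]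
      fun ψ => uFun ψ ^ 4) ∧
    ((fun ψ => Zfun ψ - (1 / 2 - uFun ψ ^ 2 / 8)) =O[nhdsWithin 0 (Set.Ioi 0)]
      fun ψ => uFun ψ ^ 4) ∧
    ((fun ψ => Zperp ψ - (1 / 2 - uFun ψ ^ 2 / 8)) =O[nhdsWithin 0 (Set.Ioi 0)]
      fun ψ => uFun ψ ^ 4) := by
  have hZperp : (fun ψ => Zfun ψ - (1 / 2 - uFun ψ ^ 2 / 8))
      =ᶠ[𝓝 0] fun ψ => Zperp ψ - (1 / 2 - uFun ψ ^ 2 / 8) := by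
    filter_upwards [eventually_nhds_zero_diffusive] with ψ hψ
    rw [Zperp_eq_Zfun hψ.1]
  exact ⟨Yfun_sub_isBigO.mono nhdsWithin_le_nhds, Zfun_sub_isBigO.mono nhdsWithin_le_nhds,
    (Zfun_sub_isBigO.congr' hZperp .rfl).mono nhdsWithin_le_nhds⟩
end

section
/- Fix A ∈ ℝ and b ∈ ℝ², and for p ∈ ℝ² \ {0} set h(p) = |p| − b·p/|p| − A and w(p) = e^{h(p)} / (1 + e^{h(p)})². Then w is integrable on ℝ², and for every (λ₀, λ₁, λ₂) ∈ ℝ³ with (λ₀, λ₁, λ₂) ≠ 0 one has ∫_{ℝ²} ( λ₀ + λ₁ p₁/|p| + λ₂ p₂/|p| )² w(p) dp > 0; equivalently, the 3×3 matrix with entries H_{ij} = ∫_{ℝ²} m_i(p) m_j(p) w(p) dp, where m(p) = (1, p₁/|p|, p₂/|p|), is symmetric positive definite. -/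
open MeasureTheory Set

/-- The Euclidean norm on `ℝ²`. -/
noncomputable def nrm (p : ℝ × ℝ) : ℝ := Real.sqrt (p.1 ^ 2 + p.2 ^ 2)

/-- `h(p) = |p| - b·p/|p| - A`. -/
noncomputable def hFun (A : ℝ) (b : ℝ × ℝ) (p : ℝ × ℝ) : ℝ :=
  nrm p - (b.1 * p.1 + b.2 * p.2) / nrm p - A

/-- `w(p) = e^{h(p)} / (1 + e^{h(p)})²`. -/
noncomputable def wFun (A : ℝ) (b : ℝ × ℝ) (p : ℝ × ℝ) : ℝ :=
  Real.exp (hFun A b p) / (1 + Real.exp (hFun A b p)) ^ 2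

/-- `m(p) = (1, p₁/|p|, p₂/|p|)`. -/
noncomputable def mvec : Fin 3 → (ℝ × ℝ) → ℝ :=
  ![fun _ => 1, fun p => p.1 / nrm p, fun p => p.2 / nrm p]

/-!
Since `eˣ/(1+eˣ)² ≤ e⁻ˣ` and `h(p) ≥ (|p₁| + |p₂|)/2 - |b₁| - |b₂| - A`, the weight `w` is dominated
by a product of one-dimensional exponentials, hence integrable, and so are all `mᵢ mⱼ w` as the
`mᵢ` are bounded by `1`. The matrix `H` is the Gram matrix of the `mᵢ` for the weight `w`, so its
quadratic form at `λ` is `∫ (λ·m)² w`. As `w > 0`, this integral is positive as soon as `λ·m` is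
nonzero at some point where it is continuous; and `λ·m` takes the values `λ₀ + λ₁`, `λ₀ - λ₁`,
`λ₀ + λ₂` at the unit vectors `(1, 0)`, `(-1, 0)`, `(0, 1)`, which cannot all vanish unless `λ = 0`.
-/

open scoped Matrix

lemma sq_sum_mul_eq_sum_mul_sum {ι : Type*} [Fintype ι] (x a : ι → ℝ) (c : ℝ) :
    (∑ i, x i * a i) ^ 2 * c = ∑ i, x i * ∑ j, a i * a j * c * x j := by
  simp only [sq, Finset.sum_mul, Finset.mul_sum]
  exact Finset.sum_congr rfl fun i _ => Finset.sum_congr rfl fun j _ => by ring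

namespace MeasureTheory

variable {α ι : Type*} [MeasurableSpace α] {μ : Measure α} [Fintype ι]
  {m : ι → α → ℝ} {w : α → ℝ}

lemma integral_sq_mul_pos [TopologicalSpace α] [μ.IsOpenPosMeasure] {f : α → ℝ} {x₀ : α}
    (hf : ContinuousAt f x₀) (hfx₀ : f x₀ ≠ 0) (hw : ∀ x, 0 < w x)
    (hint : Integrable (fun x => f x ^ 2 * w x) μ) : 0 < ∫ x, f x ^ 2 * w x ∂μ := by
  refine (integral_pos_iff_support_of_nonneg (fun x => by positivity [hw x]) hint).2 ?_
  refine Measure.measure_pos_of_mem_nhds μ (Filter.mem_of_superset (hf.eventually_ne hfx₀) ?_)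
  exact fun x hx => mul_ne_zero (pow_ne_zero 2 hx) (hw x).ne'

lemma integrable_sq_sum_mul (hint : ∀ i j, Integrable (fun p => m i p * m j p * w p) μ)
    (x : ι → ℝ) :
    Integrable (fun p => (∑ i, x i * m i p) ^ 2 * w p) μ := by
  simp only [sq_sum_mul_eq_sum_mul_sum]
  exact integrable_finsetSum _ fun i _ => (integrable_finsetSum _ fun j _ =>
    (hint i j).mul_const _).const_mul _

lemma integral_sq_sum_mul_eq_dotProduct_mulVec
    (hint : ∀ i j, Integrable (fun p => m i p * m j p * w p) μ) (x : ι → ℝ) :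
    ∫ p, (∑ i, x i * m i p) ^ 2 * w p ∂μ =
      x ⬝ᵥ (Matrix.of fun i j => ∫ p, m i p * m j p * w p ∂μ) *ᵥ x := by
  simp only [sq_sum_mul_eq_sum_mul_sum, dotProduct, Matrix.mulVec, Matrix.of_apply]
  rw [integral_finsetSum _ fun i _ => (integrable_finsetSum _ fun j _ =>
    (hint i j).mul_const _).const_mul _]
  refine Finset.sum_congr rfl fun i _ => ?_
  rw [integral_const_mul, integral_finsetSum _ fun j _ => (hint i j).mul_const _]
  simp only [integral_mul_const]

lemma posDef_of_integral_sq_sum_mul_pos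
    (hint : ∀ i j, Integrable (fun p => m i p * m j p * w p) μ)
    (hpos : ∀ x : ι → ℝ, x ≠ 0 → 0 < ∫ p, (∑ i, x i * m i p) ^ 2 * w p ∂μ) :
    (Matrix.of fun i j => ∫ p, m i p * m j p * w p ∂μ).PosDef := by
  refine .of_dotProduct_mulVec_pos ?_ fun x hx => ?_
  · ext i j
    simp only [Matrix.conjTranspose_apply, Matrix.of_apply, star_trivial, mul_comm (m i _)]
  · simpa [integral_sq_sum_mul_eq_dotProduct_mulVec hint] using hpos x hx

end MeasureTheory

lemma integrable_exp_neg_mul_abs {c : ℝ} (hc : 0 < c) :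
    Integrable fun x : ℝ => Real.exp (-c * |x|) := by
  rw [← integrableOn_univ, ← Iic_union_Ioi (a := (0 : ℝ))]
  refine .union ((integrableOn_exp_mul_Iic hc 0).congr_fun (fun x hx => ?_) measurableSet_Iic)
    ((integrableOn_exp_mul_Ioi (neg_neg_of_pos hc) 0).congr_fun (fun x hx => ?_) measurableSet_Ioi)
  · simp [abs_of_nonpos (show x ≤ 0 from hx)]
  · simp [abs_of_pos (show 0 < x from hx)]

lemma Real.exp_div_one_add_exp_sq_le_exp_neg (x : ℝ) :
    Real.exp x / (1 + Real.exp x) ^ 2 ≤ Real.exp (-x) := by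
  rw [Real.exp_neg, div_le_iff₀ (by positivity), inv_mul_eq_div, le_div_iff₀ (Real.exp_pos x)]
  nlinarith [Real.exp_pos x]

@[fun_prop]
lemma continuous_nrm : Continuous nrm := by
  unfold nrm; fun_prop

lemma nrm_nonneg (p : ℝ × ℝ) : 0 ≤ nrm p := Real.sqrt_nonneg _

lemma abs_fst_le_nrm (p : ℝ × ℝ) : |p.1| ≤ nrm p := by
  rw [nrm, ← Real.sqrt_sq_eq_abs]
  exact Real.sqrt_le_sqrt (by nlinarith [sq_nonneg p.2])

lemma abs_snd_le_nrm (p : ℝ × ℝ) : |p.2| ≤ nrm p := by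
  rw [nrm, ← Real.sqrt_sq_eq_abs]
  exact Real.sqrt_le_sqrt (by nlinarith [sq_nonneg p.1])

lemma inner_div_nrm_le (b p : ℝ × ℝ) : (b.1 * p.1 + b.2 * p.2) / nrm p ≤ |b.1| + |b.2| := by
  rcases (nrm_nonneg p).eq_or_lt with h | h
  · rw [← h, div_zero]; positivity
  · rw [div_le_iff₀ h]
    have h1 : b.1 * p.1 ≤ |b.1| * |p.1| := (le_abs_self _).trans (abs_mul _ _).le
    have h2 : b.2 * p.2 ≤ |b.2| * |p.2| := (le_abs_self _).trans (abs_mul _ _).le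
    nlinarith [abs_fst_le_nrm p, abs_snd_le_nrm p, abs_nonneg b.1, abs_nonneg b.2]

lemma measurable_wFun (A : ℝ) (b : ℝ × ℝ) : Measurable (wFun A b) := by
  unfold wFun hFun; fun_prop

lemma wFun_pos (A : ℝ) (b : ℝ × ℝ) (p : ℝ × ℝ) : 0 < wFun A b p := by
  unfold wFun; positivity

lemma wFun_le (A : ℝ) (b p : ℝ × ℝ) :
    wFun A b p ≤ Real.exp (A + |b.1| + |b.2|) *
      (Real.exp (-(1 / 2) * |p.1|) * Real.exp (-(1 / 2) * |p.2|)) := by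
  have hlower : (|p.1| + |p.2|) / 2 - (|b.1| + |b.2|) - A ≤ hFun A b p := by
    have := inner_div_nrm_le b p
    have := abs_fst_le_nrm p
    have := abs_snd_le_nrm p
    unfold hFun; linarith
  calc wFun A b p ≤ Real.exp (-hFun A b p) := Real.exp_div_one_add_exp_sq_le_exp_neg _
    _ ≤ Real.exp (A + |b.1| + |b.2| + (-(1 / 2) * |p.1| + -(1 / 2) * |p.2|)) :=
        Real.exp_le_exp.2 (by linarith)
    _ = _ := by rw [Real.exp_add _ (_ + _), Real.exp_add (-(1 / 2) * |p.1|)]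

lemma integrable_wFun (A : ℝ) (b : ℝ × ℝ) : Integrable (wFun A b) := by
  have hdom := (integrable_exp_neg_mul_abs (c := 1 / 2) (by norm_num)).mul_prod
    (integrable_exp_neg_mul_abs (c := 1 / 2) (by norm_num))
  rw [← Measure.volume_eq_prod] at hdom
  refine (hdom.const_mul (Real.exp (A + |b.1| + |b.2|))).mono'
    (measurable_wFun A b).aestronglyMeasurable (ae_of_all _ fun p => ?_)
  rw [Real.norm_of_nonneg (wFun_pos A b p).le]
  exact wFun_le A b p

lemma abs_mvec_le_one (i : Fin 3) (p : ℝ × ℝ) : |mvec i p| ≤ 1 := by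
  have key : ∀ x : ℝ, |x| ≤ nrm p → |x / nrm p| ≤ 1 := fun x hx => by
    rw [abs_div, abs_of_nonneg (nrm_nonneg p)]
    exact div_le_one_of_le₀ hx (nrm_nonneg p)
  fin_cases i
  · simp [mvec]
  · exact key _ (abs_fst_le_nrm p)
  · exact key _ (abs_snd_le_nrm p)

lemma measurable_mvec (i : Fin 3) : Measurable (mvec i) := by
  fin_cases i <;>
    simp only [mvec, Fin.zero_eta, Fin.mk_one, Fin.reduceFinMk, Fin.isValue, Matrix.cons_val,
      Matrix.cons_val_zero, Matrix.cons_val_one] <;> fun_prop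

lemma continuousAt_mvec (i : Fin 3) {p : ℝ × ℝ} (hp : nrm p ≠ 0) :
    ContinuousAt (mvec i) p := by
  fin_cases i <;>
    simp only [mvec, Fin.zero_eta, Fin.mk_one, Fin.reduceFinMk, Fin.isValue, Matrix.cons_val,
      Matrix.cons_val_zero, Matrix.cons_val_one] <;> fun_prop (disch := exact hp)

lemma integrable_mvec_mul_mvec_mul_wFun (A : ℝ) (b : ℝ × ℝ) (i j : Fin 3) :
    Integrable (fun p => mvec i p * mvec j p * wFun A b p) := by
  refine (integrable_wFun A b).bdd_mul (c := 1)
    ((measurable_mvec i).mul (measurable_mvec j)).aestronglyMeasurable (ae_of_all _ fun p => ?_)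
  rw [Real.norm_eq_abs, abs_mul]
  exact mul_le_one₀ (abs_mvec_le_one i p) (abs_nonneg _) (abs_mvec_le_one j p)

lemma exists_sum_mul_mvec_ne_zero {l : Fin 3 → ℝ} (hl : l ≠ 0) :
    ∃ p, nrm p ≠ 0 ∧ ∑ i, l i * mvec i p ≠ 0 := by
  have on_unit_circle : ∀ x y : ℝ, x ^ 2 + y ^ 2 = 1 →
      nrm (x, y) ≠ 0 ∧ ∑ i, l i * mvec i (x, y) = l 0 + l 1 * x + l 2 * y := fun x y hxy => by
    simp [Fin.sum_univ_three, mvec, nrm, hxy]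
  by_contra! hcon
  have e₁ := hcon (1, 0) (on_unit_circle 1 0 (by norm_num)).1
  have e₂ := hcon (-1, 0) (on_unit_circle (-1) 0 (by norm_num)).1
  have e₃ := hcon (0, 1) (on_unit_circle 0 1 (by norm_num)).1
  rw [(on_unit_circle 1 0 (by norm_num)).2] at e₁
  rw [(on_unit_circle (-1) 0 (by norm_num)).2] at e₂
  rw [(on_unit_circle 0 1 (by norm_num)).2] at e₃
  refine hl (funext fun i => ?_)
  fin_cases i <;> simp only [Fin.zero_eta, Fin.mk_one, Fin.reduceFinMk, Fin.isValue, Pi.zero_apply]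
    <;> linarith

/-- `w` is integrable, the quadratic form `λ ↦ ∫ (λ·m(p))² w(p) dp` is positive
definite, and the matrix `H_{ij} = ∫ m_i m_j w` is symmetric positive definite. -/
theorem hessian_pos_def (A : ℝ) (b : ℝ × ℝ) :
    Integrable (wFun A b) ∧
    (∀ l : Fin 3 → ℝ, l ≠ 0 →
      0 < ∫ p : ℝ × ℝ,
        (l 0 * mvec 0 p + l 1 * mvec 1 p + l 2 * mvec 2 p) ^ 2 * wFun A b p) ∧
    (Matrix.of fun i j : Fin 3 => ∫ p : ℝ × ℝ, mvec i p * mvec j p * wFun A b p).PosDef := by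
  have hint := integrable_mvec_mul_mvec_mul_wFun A b
  have hpos : ∀ l : Fin 3 → ℝ, l ≠ 0 → 0 < ∫ p, (∑ i, l i * mvec i p) ^ 2 * wFun A b p := by
    intro l hl
    obtain ⟨p₀, hp₀, hne⟩ := exists_sum_mul_mvec_ne_zero hl
    exact integral_sq_mul_pos (tendsto_finsetSum _ fun i _ =>
      (continuousAt_mvec i hp₀).const_mul (l i)) hne (wFun_pos A b) (integrable_sq_sum_mul hint l)
  refine ⟨integrable_wFun A b, fun l hl => ?_, posDef_of_integral_sq_sum_mul_pos hint hpos⟩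
  simpa only [Fin.sum_univ_three] using hpos l hl
end

section
/- For every A ∈ ℝ and B ≥ 0 one has 𝓘₀²(A,B) > 0 and 0 ≤ 𝓘₁²(A,B) < 𝓘₀²(A,B); moreover 𝓘₁²(A,B) = 0 if and only if B = 0. -/
open MeasureTheory Set

lemma fermi_two_eq (x : ℝ) :
    fermi 2 x = ∫ t in Set.Ioi (0 : ℝ), t / (Real.exp (t - x) + 1) := by
  unfold fermi
  rw [Real.Gamma_two]
  norm_num

lemma denom_pos (t x : ℝ) : 0 < Real.exp (t - x) + 1 := by positivity

lemma integrable_fermi2 (x : ℝ) :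
    IntegrableOn (fun t => t / (Real.exp (t - x) + 1)) (Set.Ioi 0) := by
  have hg : IntegrableOn
      (fun t : ℝ => Real.exp x * (Real.exp (-t) * t ^ ((2:ℝ) - 1))) (Set.Ioi 0) :=
    (Real.GammaIntegral_convergent (by norm_num)).const_mul _
  refine hg.mono' ?_ ?_
  · refine (Continuous.aestronglyMeasurable ?_).restrict
    exact continuous_id.div (by continuity) (fun t => (denom_pos t x).ne')
  · refine Filter.eventually_of_mem (self_mem_ae_restrict measurableSet_Ioi) (fun t ht => ?_)
    have ht0 : (0:ℝ) < t := ht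
    have h1 : ‖t / (Real.exp (t - x) + 1)‖ = t / (Real.exp (t - x) + 1) := by
      rw [Real.norm_eq_abs, abs_of_nonneg]
      positivity
    rw [h1]
    have h2 : t / (Real.exp (t - x) + 1) ≤ t / Real.exp (t - x) :=
      div_le_div_of_nonneg_left ht0.le (Real.exp_pos _) (by linarith)
    refine h2.trans_eq ?_
    rw [div_eq_mul_inv, ← Real.exp_neg]
    have h3 : (2:ℝ) - 1 = 1 := by norm_num
    rw [h3, Real.rpow_one, show -(t - x) = x + -t by ring, Real.exp_add]
    ring

lemma fermi2_pos (x : ℝ) : 0 < fermi 2 x := by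
  rw [fermi_two_eq]
  rw [setIntegral_pos_iff_support_of_nonneg_ae]
  · have : Function.support (fun t => t / (Real.exp (t - x) + 1)) ∩ Set.Ioi 0 = Set.Ioi 0 := by
      rw [inter_eq_right]
      intro t ht
      have ht0 : (0:ℝ) < t := ht
      exact (div_pos ht0 (denom_pos t x)).ne'
    rw [this, Real.volume_Ioi]
    exact ENNReal.zero_lt_top
  · refine Filter.eventually_of_mem (self_mem_ae_restrict measurableSet_Ioi) (fun t ht => ?_)
    have ht0 : (0:ℝ) < t := ht
    positivity
  · exact integrable_fermi2 x

lemma fermi2_strictMono : StrictMono (fermi 2) := by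
  intro x y hxy
  rw [fermi_two_eq, fermi_two_eq, ← sub_pos, ← integral_sub (integrable_fermi2 y) (integrable_fermi2 x)]
  rw [setIntegral_pos_iff_support_of_nonneg_ae]
  · have key : ∀ t ∈ Set.Ioi (0:ℝ),
        0 < t / (Real.exp (t - y) + 1) - t / (Real.exp (t - x) + 1) := by
      intro t ht
      have ht0 : (0:ℝ) < t := ht
      have : Real.exp (t - y) + 1 < Real.exp (t - x) + 1 := by
        have := Real.exp_lt_exp.mpr (show t - y < t - x by linarith)
        linarith
      have := div_lt_div_of_pos_left ht0 (denom_pos t y) this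
      linarith
    have : Function.support (fun t => t / (Real.exp (t - y) + 1) - t / (Real.exp (t - x) + 1))
        ∩ Set.Ioi 0 = Set.Ioi 0 := by
      rw [inter_eq_right]
      exact fun t ht => (key t ht).ne'
    rw [this, Real.volume_Ioi]
    exact ENNReal.zero_lt_top
  · refine Filter.eventually_of_mem (self_mem_ae_restrict measurableSet_Ioi) (fun t ht => ?_)
    have ht0 : (0:ℝ) < t := ht
    show 0 ≤ t / (Real.exp (t - y) + 1) - t / (Real.exp (t - x) + 1)
    have : Real.exp (t - y) + 1 ≤ Real.exp (t - x) + 1 := by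
      have := Real.exp_le_exp.mpr (show t - y ≤ t - x by linarith)
      linarith
    have h := div_le_div_of_nonneg_left ht0.le (denom_pos t y) this
    linarith
  · exact (integrable_fermi2 y).sub (integrable_fermi2 x)

lemma fermi2_mono : Monotone (fermi 2) := fermi2_strictMono.monotone

/-- The composition `θ ↦ φ₂(A + B cos θ)` is antitone on `[0, π]`. -/
lemma comp_antitoneOn (A B : ℝ) (hB : 0 ≤ B) :
    AntitoneOn (fun θ => fermi 2 (A + B * Real.cos θ)) (Set.Icc 0 Real.pi) := by
  intro θ₁ h₁ θ₂ h₂ h12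
  refine fermi2_mono (by gcongr; exact Real.strictAntiOn_cos.antitoneOn h₁ h₂ h12)

lemma comp_intervalIntegrable (A B : ℝ) (hB : 0 ≤ B) :
    IntervalIntegrable (fun θ => fermi 2 (A + B * Real.cos θ)) volume 0 Real.pi := by
  apply AntitoneOn.intervalIntegrable
  rw [Set.uIcc_of_le Real.pi_pos.le]
  exact comp_antitoneOn A B hB

/-- `𝓘₀²(A,B) > 0`, `0 ≤ 𝓘₁²(A,B) < 𝓘₀²(A,B)`, and `𝓘₁²(A,B) = 0 ↔ B = 0`. -/
theorem calI_basic_bounds (A B : ℝ) (hB : 0 ≤ B) :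
    0 < calI 0 2 A B ∧ 0 ≤ calI 1 2 A B ∧ calI 1 2 A B < calI 0 2 A B ∧
    (calI 1 2 A B = 0 ↔ B = 0) := by
  have hπ := Real.pi_pos
  have hf : IntervalIntegrable (fun θ => fermi 2 (A + B * Real.cos θ)) volume 0 Real.pi :=
    comp_intervalIntegrable A B hB
  have hg : IntervalIntegrable
      (fun θ => Real.cos θ * fermi 2 (A + B * Real.cos θ)) volume 0 Real.pi :=
    hf.continuousOn_mul Real.continuous_cos.continuousOn
  have hI0 : calI 0 2 A B
      = (1 / Real.pi) * ∫ θ in (0:ℝ)..Real.pi, fermi 2 (A + B * Real.cos θ) := by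
    simp [calI]
  have hI1 : calI 1 2 A B
      = (1 / Real.pi) * ∫ θ in (0:ℝ)..Real.pi, Real.cos θ * fermi 2 (A + B * Real.cos θ) := by
    simp [calI]
  -- positivity of `calI 0`
  have h0 : 0 < calI 0 2 A B := by
    rw [hI0]
    exact mul_pos (by positivity)
      (intervalIntegral.intervalIntegral_pos_of_pos_on hf (fun x _ => fermi2_pos _) hπ)
  -- `calI 1 < calI 0`
  have h10 : calI 1 2 A B < calI 0 2 A B := by
    rw [← sub_pos, hI0, hI1, ← mul_sub, ← intervalIntegral.integral_sub hf hg]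
    refine mul_pos (by positivity)
      (intervalIntegral.intervalIntegral_pos_of_pos_on (hf.sub hg) (fun x hx => ?_) hπ)
    have hc : Real.cos x < 1 := by
      have := Real.strictAntiOn_cos (Set.left_mem_Icc.mpr hπ.le) ⟨hx.1.le, hx.2.le⟩ hx.1
      simpa using this
    have hfp := fermi2_pos (A + B * Real.cos x)
    nlinarith
  -- `calI 1` at `B = 0`
  have hz : calI 1 2 A 0 = 0 := by
    simp [calI, intervalIntegral.integral_mul_const, Real.sin_pi, integral_cos]
  -- `calI 1 > 0` when `B > 0`
  have hpos : 0 < B → 0 < calI 1 2 A B := by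
    intro hB0
    set g : ℝ → ℝ := fun θ => Real.cos θ * fermi 2 (A + B * Real.cos θ) with hgdef
    have hsub1 : Set.uIcc (0:ℝ) (Real.pi/2) ⊆ Set.uIcc (0:ℝ) Real.pi := by
      rw [Set.uIcc_of_le (by linarith), Set.uIcc_of_le hπ.le]
      exact Set.Icc_subset_Icc le_rfl (by linarith)
    have hsub2 : Set.uIcc (Real.pi/2) Real.pi ⊆ Set.uIcc (0:ℝ) Real.pi := by
      rw [Set.uIcc_of_le (by linarith), Set.uIcc_of_le hπ.le]
      exact Set.Icc_subset_Icc (by linarith) le_rfl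
    have hg1 : IntervalIntegrable g volume 0 (Real.pi/2) := hg.mono_set hsub1
    have hg2 : IntervalIntegrable g volume (Real.pi/2) Real.pi := hg.mono_set hsub2
    have hg2' : IntervalIntegrable (fun u => g (Real.pi - u)) volume 0 (Real.pi/2) := by
      have h := (hg2.comp_sub_left Real.pi).symm
      rwa [show Real.pi - Real.pi/2 = Real.pi/2 by ring, sub_self] at h
    have hrefl : (∫ u in (0:ℝ)..Real.pi/2, g (Real.pi - u))
        = ∫ x in (Real.pi/2)..Real.pi, g x := by
      have h := intervalIntegral.integral_comp_sub_left (a := (0:ℝ)) (b := Real.pi/2) g Real.pi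
      rwa [show Real.pi - Real.pi/2 = Real.pi/2 by ring, sub_zero] at h
    have hsplit : (∫ θ in (0:ℝ)..Real.pi, g θ)
        = ∫ θ in (0:ℝ)..Real.pi/2, (g θ + g (Real.pi - θ)) := by
      rw [← intervalIntegral.integral_add_adjacent_intervals hg1 hg2, ← hrefl,
        ← intervalIntegral.integral_add hg1 hg2']
    have hkey : 0 < ∫ θ in (0:ℝ)..Real.pi/2, (g θ + g (Real.pi - θ)) := by
      refine intervalIntegral.intervalIntegral_pos_of_pos_on (hg1.add hg2')
        (fun x hx => ?_) (by linarith)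
      have hcx : 0 < Real.cos x :=
        Real.cos_pos_of_mem_Ioo ⟨by linarith [hx.1], hx.2⟩
      have hmono : fermi 2 (A + B * (-Real.cos x)) < fermi 2 (A + B * Real.cos x) := by
        apply fermi2_strictMono
        nlinarith
      have : g x + g (Real.pi - x)
          = Real.cos x * (fermi 2 (A + B * Real.cos x) - fermi 2 (A + B * (-Real.cos x))) := by
        simp only [hgdef, Real.cos_pi_sub]
        ring
      rw [this]
      nlinarith
    rw [hI1]
    exact mul_pos (by positivity) (hsplit ▸ hkey)
  rcases eq_or_lt_of_le hB with hB0 | hB0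
  · refine ⟨h0, ?_, h10, ?_⟩
    · rw [← hB0, hz]
    · rw [← hB0, hz]
  · exact ⟨h0, (hpos hB0).le, h10,
      ⟨fun h => absurd h (hpos hB0).ne', fun h => absurd h hB0.ne'⟩⟩
end

section
/- For A ∈ ℝ and B ≥ 0, define E[f] = (1/π) ∫₀^π f(θ) φ₁(A + B cos θ) dθ for continuous f : [0,π] → ℝ. Then E[1]·E[cos²θ] − (E[cos θ])² > 0; consequently the Jacobian determinant of the map (A,B) ↦ ( 𝓘₀²(A,B), 𝓘₁²(A,B) ), whose Jacobian matrix has entries ∂_A𝓘₀² = E[1], ∂_B𝓘₀² = ∂_A𝓘₁² = E[cos θ], ∂_B𝓘₁² = E[cos²θ], is strictly positive. -/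
open MeasureTheory Set

/-- `E[f] = (1/π) ∫₀^π f(θ) φ₁(A + B cos θ) dθ`. -/
noncomputable def Efun (A B : ℝ) (f : ℝ → ℝ) : ℝ :=
  (1 / Real.pi) * ∫ θ in (0 : ℝ)..Real.pi, f θ * fermi 1 (A + B * Real.cos θ)

/-!
The quadratic form `(E[1], E[cos θ], E[cos² θ])` is the Gram matrix of `1, cos θ` for the weight
`φ₁(A + B cos θ) = log (1 + e^{A + B cos θ})`, which is continuous and positive. Expanding
`∫ (S₀ cos θ - S₁)² w ≥ 0` with `Sₖ = ∫ cosᵏ θ · w` gives `S₀ (S₀ S₂ - S₁²) ≥ 0`, and the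
inequality is strict because `cos` is not constant on `[0, π]`.
-/

open Real Filter Topology

theorem hasDerivAt_neg_log_one_add_exp_sub (x t : ℝ) :
    HasDerivAt (fun t => -log (1 + exp (x - t))) (1 / (exp (t - x) + 1)) t := by
  have h : HasDerivAt (fun t => -log (1 + exp (x - t))) _ t :=
    ((((hasDerivAt_id t).const_sub x).exp).const_add 1).log (by positivity) |>.neg
  convert h using 1
  rw [show exp (t - x) = (exp (x - t))⁻¹ by rw [← exp_neg, neg_sub]]
  field_simp
  simp [mul_comm]

theorem tendsto_neg_log_one_add_exp_sub (x : ℝ) :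
    Tendsto (fun t => -log (1 + exp (x - t))) atTop (𝓝 0) := by
  have hexp : Tendsto (fun t => 1 + exp (x - t)) atTop (𝓝 1) := by
    simpa [sub_eq_add_neg] using (tendsto_exp_atBot.comp
      (tendsto_atBot_add_const_left _ x tendsto_neg_atTop_atBot)).const_add 1
  simpa using ((continuousAt_log one_ne_zero).tendsto.comp hexp).neg

theorem fermi_one (x : ℝ) : fermi 1 x = log (1 + exp x) := by
  have h := integral_Ioi_of_hasDerivAt_of_nonneg' (a := 0)
    (fun t _ => hasDerivAt_neg_log_one_add_exp_sub x t) (fun t _ => by positivity)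
    (tendsto_neg_log_one_add_exp_sub x)
  simp only [fermi, Gamma_one, sub_self, rpow_zero, div_one, one_mul]
  simpa using h

theorem fermi_one_pos (x : ℝ) : 0 < fermi 1 x := by
  rw [fermi_one]
  exact log_pos (lt_add_of_pos_right 1 (exp_pos x))

theorem continuous_fermi_one : Continuous (fermi 1) := by
  simp only [funext fermi_one]
  exact (continuous_const.add continuous_exp).log fun x => (add_pos one_pos (exp_pos x)).ne'

section StrictCauchySchwarz

variable {a b : ℝ} {f w : ℝ → ℝ}

theorem integral_sq_sub_mul_eq (hab : a ≤ b) (hf : ContinuousOn f (Icc a b))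
    (hw : ContinuousOn w (Icc a b)) (c d : ℝ) :
    ∫ t in a..b, (c * f t - d) ^ 2 * w t =
      c ^ 2 * (∫ t in a..b, f t ^ 2 * w t) - 2 * c * d * (∫ t in a..b, f t * w t)
        + d ^ 2 * ∫ t in a..b, w t := by
  have hf2w : IntervalIntegrable (fun t => f t ^ 2 * w t) volume a b :=
    ((hf.pow 2).mul hw).intervalIntegrable_of_Icc hab
  have hfw : IntervalIntegrable (fun t => f t * w t) volume a b :=
    (hf.mul hw).intervalIntegrable_of_Icc hab
  have hw' : IntervalIntegrable w volume a b := hw.intervalIntegrable_of_Icc hab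
  simp_rw [show ∀ t, (c * f t - d) ^ 2 * w t
      = c ^ 2 * (f t ^ 2 * w t) - 2 * c * d * (f t * w t) + d ^ 2 * w t from fun t => by ring]
  rw [intervalIntegral.integral_add ((hf2w.const_mul _).sub (hfw.const_mul _)) (hw'.const_mul _),
    intervalIntegral.integral_sub (hf2w.const_mul _) (hfw.const_mul _),
    intervalIntegral.integral_const_mul, intervalIntegral.integral_const_mul,
    intervalIntegral.integral_const_mul]

theorem sq_integral_mul_lt_integral_mul_integral (hab : a < b) (hf : ContinuousOn f (Icc a b))
    (hw : ContinuousOn w (Icc a b)) (hw_pos : ∀ t ∈ Icc a b, 0 < w t) {x y : ℝ}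
    (hx : x ∈ Icc a b) (hy : y ∈ Icc a b) (hfxy : f x ≠ f y) :
    (∫ t in a..b, f t * w t) ^ 2 < (∫ t in a..b, w t) * ∫ t in a..b, f t ^ 2 * w t := by
  set S₀ := ∫ t in a..b, w t
  set S₁ := ∫ t in a..b, f t * w t
  set S₂ := ∫ t in a..b, f t ^ 2 * w t
  have hS₀ : 0 < S₀ := intervalIntegral.intervalIntegral_pos_of_pos_on
    (hw.intervalIntegrable_of_Icc hab.le) (fun t ht => hw_pos t (Ioo_subset_Icc_self ht)) hab
  obtain ⟨z, hz, hz_ne⟩ : ∃ z ∈ Icc a b, S₀ * f z - S₁ ≠ 0 := by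
    by_contra! h
    exact hfxy (mul_left_cancel₀ hS₀.ne' (by linarith [h x hx, h y hy]))
  have hvar : 0 < ∫ t in a..b, (S₀ * f t - S₁) ^ 2 * w t := by
    simpa using intervalIntegral.integral_lt_integral_of_continuousOn_of_le_of_exists_lt hab
      continuousOn_const (((hf.const_smul S₀).sub continuousOn_const).pow 2 |>.mul hw)
      (fun t ht => mul_nonneg (sq_nonneg _) (hw_pos t (Ioc_subset_Icc_self ht)).le)
      ⟨z, hz, mul_pos (sq_pos_of_ne_zero hz_ne) (hw_pos z hz)⟩
  have hfactor : ∫ t in a..b, (S₀ * f t - S₁) ^ 2 * w t = S₀ * (S₀ * S₂ - S₁ ^ 2) := by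
    rw [integral_sq_sub_mul_eq hab.le hf hw]
    ring
  rw [hfactor] at hvar
  exact sub_pos.1 (pos_of_mul_pos_right hvar hS₀.le)

end StrictCauchySchwarz

theorem jacobian_det_pos_general (A B : ℝ) :
    0 < Efun A B (fun _ => 1) * Efun A B (fun θ => Real.cos θ ^ 2)
        - (Efun A B (fun θ => Real.cos θ)) ^ 2 ∧
    0 < (!![Efun A B (fun _ => 1), Efun A B (fun θ => Real.cos θ);
            Efun A B (fun θ => Real.cos θ), Efun A B (fun θ => Real.cos θ ^ 2)]).det := by
  have hweight : Continuous fun θ => fermi 1 (A + B * cos θ) := continuous_fermi_one.comp (by fun_prop)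
  have hgram := sq_integral_mul_lt_integral_mul_integral pi_pos continuous_cos.continuousOn
    hweight.continuousOn (fun θ _ => fermi_one_pos _) (left_mem_Icc.2 pi_pos.le)
    (right_mem_Icc.2 pi_pos.le) (by norm_num : cos 0 ≠ cos π)
  have hdet : 0 < Efun A B (fun _ => 1) * Efun A B (fun θ => cos θ ^ 2)
      - (Efun A B (fun θ => cos θ)) ^ 2 := by
    simp only [Efun, one_mul]
    linear_combination (1 / π) ^ 2 * hgram
  exact ⟨hdet, by rwa [Matrix.det_fin_two_of, ← sq]⟩

/-- `E[1]·E[cos²θ] - (E[cos θ])² > 0`; consequently the Jacobian determinant of the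
map `(A,B) ↦ (𝓘₀², 𝓘₁²)`, whose Jacobian matrix is
`!![E[1], E[cos θ]; E[cos θ], E[cos²θ]]`, is strictly positive. -/
theorem jacobian_det_pos (A B : ℝ) (hB : 0 ≤ B) :
    0 < Efun A B (fun _ => 1) * Efun A B (fun θ => Real.cos θ ^ 2)
        - (Efun A B (fun θ => Real.cos θ)) ^ 2 ∧
    0 < (!![Efun A B (fun _ => 1), Efun A B (fun θ => Real.cos θ);
            Efun A B (fun θ => Real.cos θ), Efun A B (fun θ => Real.cos θ ^ 2)]).det :=
  jacobian_det_pos_general A B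
end

section
/- Let u : ℝ² → ℝ² and K : ℝ² → ℝ be continuously differentiable, suppose |u(x)| = 1 for every x ∈ ℝ², and suppose that at every point (u·∇)u + (u^⊥·∇K) u^⊥ = 0, where u^⊥ = (−u₂, u₁). Then div( e^{−K} u^⊥ ) = 0 at every point, i.e. ∂₁( e^{−K} (−u₂) ) + ∂₂( e^{−K} u₁ ) = 0. -/
/-- Partial derivative in the first coordinate direction. -/
noncomputable def pd1 (f : ℝ × ℝ → ℝ) (x : ℝ × ℝ) : ℝ := fderiv ℝ f x (1, 0)

/-- Partial derivative in the second coordinate direction. -/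
noncomputable def pd2 (f : ℝ × ℝ → ℝ) (x : ℝ × ℝ) : ℝ := fderiv ℝ f x (0, 1)

/-!
Write `u = (a, b)`. Differentiating `a² + b² = 1` gives `a ∇a + b ∇b = 0`, and with it the
curvature `u^⊥ · (u·∇)u` of the integral curves of the unit field `u` reduces to its curl
`∂₁b - ∂₂a`. Dotting the equation of motion with `u^⊥` therefore gives `∂₁b - ∂₂a = -u^⊥·∇K`,
while the product rule gives `div(e^{-K} u^⊥) = e^{-K} (∂₂a - ∂₁b - u^⊥·∇K)`.
-/

open Real Filter Topology

theorem HasFDerivAt.sq_add_sq_apply_eq_zero {E : Type*} [NormedAddCommGroup E]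
    [NormedSpace ℝ E] {f g : E → ℝ} {f' g' : E →L[ℝ] ℝ} {c : ℝ} {x : E}
    (hf : HasFDerivAt f f' x) (hg : HasFDerivAt g g' x)
    (h : ∀ᶠ y in 𝓝 x, f y ^ 2 + g y ^ 2 = c) (v : E) :
    f x * f' v + g x * g' v = 0 := by
  have hconst : HasFDerivAt (fun y => f y ^ 2 + g y ^ 2) (0 : E →L[ℝ] ℝ) x :=
    (hasFDerivAt_const c x).congr_of_eventuallyEq h
  have := congrArg (· v) (((hf.pow 2).add (hg.pow 2)).unique hconst)
  simp only [add_apply, smul_apply, smul_eq_mul, zero_apply, nsmul_eq_mul, Nat.cast_ofNat,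
    Nat.add_one_sub_one, pow_one] at this
  linarith

theorem curl_eq_perp_dot_advection_of_unit {a b : ℝ × ℝ → ℝ} {x : ℝ × ℝ}
    (ha : DifferentiableAt ℝ a x) (hb : DifferentiableAt ℝ b x)
    (hunit : ∀ᶠ y in 𝓝 x, a y ^ 2 + b y ^ 2 = 1) :
    pd1 b x - pd2 a x
      = -b x * (a x * pd1 a x + b x * pd2 a x) + a x * (a x * pd1 b x + b x * pd2 b x) := by
  have h₁ := ha.hasFDerivAt.sq_add_sq_apply_eq_zero hb.hasFDerivAt hunit (1, 0)
  have h₂ := ha.hasFDerivAt.sq_add_sq_apply_eq_zero hb.hasFDerivAt hunit (0, 1)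
  simp only [pd1, pd2]
  linear_combination b x * h₁ - a x * h₂
    + (fderiv ℝ a x (0, 1) - fderiv ℝ b x (1, 0)) * hunit.self_of_nhds

theorem pd1_add_pd2_exp_neg_mul {K w₁ w₂ : ℝ × ℝ → ℝ} {x : ℝ × ℝ}
    (hK : DifferentiableAt ℝ K x) (h₁ : DifferentiableAt ℝ w₁ x)
    (h₂ : DifferentiableAt ℝ w₂ x) :
    pd1 (fun y => exp (-K y) * w₁ y) x + pd2 (fun y => exp (-K y) * w₂ y) x
      = exp (-K x) * (pd1 w₁ x + pd2 w₂ x - (w₁ x * pd1 K x + w₂ x * pd2 K x)) := by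
  have hE : HasFDerivAt (fun y => exp (-K y)) (exp (-K x) • -fderiv ℝ K x) x :=
    hK.hasFDerivAt.neg.exp
  simp only [pd1, pd2, fderiv_fun_mul hE.differentiableAt h₁,
    fderiv_fun_mul hE.differentiableAt h₂, hE.fderiv, add_apply, smul_apply, neg_apply,
    smul_eq_mul]
  ring

/-- If `u : ℝ² → ℝ²` and `K : ℝ² → ℝ` are `C¹`, `|u| = 1` everywhere, and
`(u·∇)u + (u^⊥·∇K) u^⊥ = 0` with `u^⊥ = (-u₂, u₁)`, then `div(e^{-K} u^⊥) = 0`. -/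
theorem collimation_geometric_optics
    (u : ℝ × ℝ → ℝ × ℝ) (K : ℝ × ℝ → ℝ)
    (hu : ContDiff ℝ 1 u) (hK : ContDiff ℝ 1 K)
    (hnorm : ∀ x, Real.sqrt ((u x).1 ^ 2 + (u x).2 ^ 2) = 1)
    (heq1 : ∀ x,
      (u x).1 * pd1 (fun y => (u y).1) x + (u x).2 * pd2 (fun y => (u y).1) x
        + (-(u x).2 * pd1 K x + (u x).1 * pd2 K x) * (-(u x).2) = 0)
    (heq2 : ∀ x,
      (u x).1 * pd1 (fun y => (u y).2) x + (u x).2 * pd2 (fun y => (u y).2) x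
        + (-(u x).2 * pd1 K x + (u x).1 * pd2 K x) * (u x).1 = 0) :
    ∀ x, pd1 (fun y => Real.exp (-K y) * (-(u y).2)) x
        + pd2 (fun y => Real.exp (-K y) * (u y).1) x = 0 := by
  intro x
  have hux : DifferentiableAt ℝ u x := (hu.differentiable one_ne_zero) x
  have hunit : ∀ y, (u y).1 ^ 2 + (u y).2 ^ 2 = 1 := fun y => Real.sqrt_eq_one.mp (hnorm y)
  have hcurl := curl_eq_perp_dot_advection_of_unit hux.fst hux.snd (.of_forall hunit)
  have hneg : pd1 (fun y => -(u y).2) x = -pd1 (fun y => (u y).2) x := by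
    rw [pd1, pd1, fderiv_fun_neg, neg_apply]
  rw [pd1_add_pd2_exp_neg_mul (w₁ := fun y => -(u y).2) (hK.differentiable one_ne_zero x)
    hux.snd.neg hux.fst, hneg]
  linear_combination exp (-K x) * ((u x).2 * heq1 x - (u x).1 * heq2 x - hcurl
    + (-(u x).2 * pd1 K x + (u x).1 * pd2 K x) * hunit x)
end
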